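/- arXiv:2203.11416 — 5 statements merged into one kernel-verified Lean document; each statement's English description precedes it below -/
import Mathlib

section
/- For all n ≥ 1, the number of permutations of length n avoiding all of the patterns 231, 312, 4321, and 21543 equals F_{n+1} - 1, where F is the Fibonacci sequence with F_0 = F_1 = 1. -/
open Finset MvPolynomial
open scoped Classical

/-- `π` contains the pattern given by the list `p` (one-line notation). -/
def ContainsPat {n : ℕ} (π : Equiv.Perm (Fin n)) (p : List ℕ) : Prop :=
  ∃ f : Fin p.length → Fin n, StrictMono f ∧
    ∀ i j : Fin p.length, p.get i < p.get j ↔ π (f i) < π (f j)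

/-- `π` avoids every pattern in the list `S`. -/
def AvoidsAll {n : ℕ} (π : Equiv.Perm (Fin n)) (S : List (List ℕ)) : Prop :=
  ∀ p ∈ S, ¬ ContainsPat π p

/-- Fibonacci numbers with the convention `F 0 = F 1 = 1`. -/
def fib' : ℕ → ℕ
  | 0 => 1
  | 1 => 1
  | n + 2 => fib' (n + 1) + fib' n

/-- number of inversions -/
def invNum {n : ℕ} (π : Equiv.Perm (Fin n)) : ℕ :=
  (Finset.univ.filter (fun p : Fin n × Fin n => p.1 < p.2 ∧ π p.2 < π p.1)).card

/-- The last `k` entries of `π` contain pattern `p`. -/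
def SegContainsPat {n : ℕ} (π : Equiv.Perm (Fin n)) (k : ℕ) (p : List ℕ) : Prop :=
  ∃ f : Fin p.length → Fin n, StrictMono f ∧ (∀ i, n - k ≤ ((f i : Fin n) : ℕ)) ∧
    ∀ i j : Fin p.length, p.get i < p.get j ↔ π (f i) < π (f j)

/-- The last `k` entries of `π` are the top `k` values and form a Fibonacci permutation. -/
def IsFinalFib {n : ℕ} (π : Equiv.Perm (Fin n)) (k : ℕ) : Prop :=
  k ≤ n ∧ (∀ i : Fin n, n - k ≤ (i : ℕ) → n - k ≤ ((π i : Fin n) : ℕ)) ∧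
    ∀ p ∈ [[2,3,1],[3,1,2],[3,2,1]], ¬ SegContainsPat π k p

/-- `Fib(π)`: length of the longest final segment of `π` consisting of the top values
and avoiding 231, 312, 321. -/
noncomputable def fibStat {n : ℕ} (π : Equiv.Perm (Fin n)) : ℕ := sSup {k | IsFinalFib π k}

/-- direct sum `π ⊕ σ` -/
def dsum {m n : ℕ} (π : Equiv.Perm (Fin m)) (σ : Equiv.Perm (Fin n)) :
    Equiv.Perm (Fin (m + n)) :=
  finSumFinEquiv.symm.trans ((Equiv.sumCongr π σ).trans finSumFinEquiv)

/-- skew sum `π ⊖ σ` -/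
def sskew {m n : ℕ} (π : Equiv.Perm (Fin m)) (σ : Equiv.Perm (Fin n)) :
    Equiv.Perm (Fin (m + n)) :=
  finSumFinEquiv.symm.trans ((Equiv.sumCongr π σ).trans
    ((Equiv.sumComm (Fin m) (Fin n)).trans (finSumFinEquiv.trans (finCongr (Nat.add_comm n m)))))

/-- the pattern 321 as a permutation of `Fin 3` -/
def perm321 : Equiv.Perm (Fin 3) := Fin.revPerm

/-- the pattern 312 as a permutation of `Fin 3` -/
def perm312 : Equiv.Perm (Fin 3) := (finRotate 3)⁻¹

/-- binomial coefficient on ℤ, zero when undefined -/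
def C (a b : ℤ) : ℤ := if 0 ≤ b ∧ b ≤ a then (a.toNat.choose b.toNat : ℤ) else 0

/-- generating function `G_n(v,q)` with `v = X 0`, `q = X 1` -/
noncomputable def G (n : ℕ) (S : List (List ℕ)) : MvPolynomial (Fin 2) ℤ :=
  ∑ π ∈ Finset.univ.filter (fun π : Equiv.Perm (Fin n) => AvoidsAll π S),
    X 0 ^ fibStat π * X 1 ^ invNum π

/-- Fibonacci generating function `F_n(q)` with `q = X 1` -/
noncomputable def Fq (n : ℕ) : MvPolynomial (Fin 2) ℤ :=
  ∑ π ∈ Finset.univ.filter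
      (fun π : Equiv.Perm (Fin n) => AvoidsAll π [[2,3,1],[3,1,2],[3,2,1]]),
    X 1 ^ invNum π

/-!
A permutation avoiding 231 and 312 starts with a decreasing layer: if `π 0 = c`, then
`π i = c - i` for `i ≤ c`, so `π` is the direct sum of the decreasing permutation `δ` of length
`c + 1` with some `σ`. In `δ ⊕ σ` the first summand is decreasing and lies below the second, so
an ascent of a pattern never ends in `δ` and an inversion never leaves it. Hence occurrences of
231, 312, 321 and 4321 avoid `δ` as soon as `δ` is too short to hold the pattern, and
21543 = 21 ⊕ 321 occurs in `δ ⊕ σ` with `|δ| ≥ 2` exactly when 321 occurs in `σ`.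

Writing `a n` and `b n` for the numbers of permutations avoiding {231, 312, 4321, 21543} and
{231, 312, 321}, the first layer has length at most 3, resp. 2, and splitting by its length gives
`a (n + 3) = a (n + 2) + b (n + 1) + b n` and `b (n + 2) = b (n + 1) + b n`. So `b n = F n`, and
`a n = F (n + 1) - 1` follows from the base cases `a 1 = 1`, `a 2 = 2`.
-/

section Patterns

variable {n : ℕ} {π : Equiv.Perm (Fin n)}

theorem containsPat_of_forall_lt {p : List ℕ} (hp : p.Nodup) (f : Fin p.length → Fin n)
    (hf : StrictMono f) (h : ∀ i j, p.get i < p.get j → π (f i) < π (f j)) :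
    ContainsPat π p := by
  refine ⟨f, hf, fun i j => ⟨h i j, fun hπ => ?_⟩⟩
  rcases lt_trichotomy (p.get i) (p.get j) with hij | hij | hij
  · exact hij
  · rw [hp.get_inj_iff.1 hij] at hπ
    exact absurd hπ (lt_irrefl _)
  · exact absurd (h j i hij) hπ.asymm

theorem ContainsPat.length_le {p : List ℕ} (h : ContainsPat π p) : p.length ≤ n := by
  obtain ⟨f, hf, -⟩ := h
  simpa using Fintype.card_le_of_injective f hf.injective

theorem containsPat_231 {a b c : Fin n} (hab : a < b) (hbc : b < c)
    (hca : π c < π a) (hab' : π a < π b) : ContainsPat π [2, 3, 1] :=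
  containsPat_of_forall_lt (by decide) ![a, b, c]
    (Fin.strictMono_iff_lt_succ.2 fun i => by fin_cases i <;> assumption)
    (fun i j => by fin_cases i <;> fin_cases j <;> simp <;> order)

theorem containsPat_312 {a b c : Fin n} (hab : a < b) (hbc : b < c)
    (hbc' : π b < π c) (hca : π c < π a) : ContainsPat π [3, 1, 2] :=
  containsPat_of_forall_lt (by decide) ![a, b, c]
    (Fin.strictMono_iff_lt_succ.2 fun i => by fin_cases i <;> assumption)
    (fun i j => by fin_cases i <;> fin_cases j <;> simp <;> order)

theorem containsPat_321 {a b c : Fin n} (hab : a < b) (hbc : b < c)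
    (hba : π b < π a) (hcb : π c < π b) : ContainsPat π [3, 2, 1] :=
  containsPat_of_forall_lt (by decide) ![a, b, c]
    (Fin.strictMono_iff_lt_succ.2 fun i => by fin_cases i <;> assumption)
    (fun i j => by fin_cases i <;> fin_cases j <;> simp <;> order)

theorem containsPat_4321 {a b c d : Fin n} (hab : a < b) (hbc : b < c) (hcd : c < d)
    (hba : π b < π a) (hcb : π c < π b) (hdc : π d < π c) : ContainsPat π [4, 3, 2, 1] :=
  containsPat_of_forall_lt (by decide) ![a, b, c, d]
    (Fin.strictMono_iff_lt_succ.2 fun i => by fin_cases i <;> assumption)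
    (fun i j => by fin_cases i <;> fin_cases j <;> simp <;> order)

theorem containsPat_21543 {a b c d e : Fin n} (hab : a < b) (hbc : b < c) (hcd : c < d)
    (hde : d < e) (hba : π b < π a) (hae : π a < π e) (hed : π e < π d) (hdc : π d < π c) :
    ContainsPat π [2, 1, 5, 4, 3] :=
  containsPat_of_forall_lt (by decide) ![a, b, c, d, e]
    (Fin.strictMono_iff_lt_succ.2 fun i => by fin_cases i <;> assumption)
    (fun i j => by fin_cases i <;> fin_cases j <;> simp <;> order)

end Patterns

theorem val_add_val_eq_head {n : ℕ} {π : Equiv.Perm (Fin n)} (h231 : ¬ ContainsPat π [2, 3, 1])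
    (h312 : ¬ ContainsPat π [3, 1, 2]) (hn : 0 < n) (x : Fin n) (hx : (x : ℕ) ≤ π ⟨0, hn⟩) :
    (π x : ℕ) + x = π ⟨0, hn⟩ := by
  set o : Fin n := ⟨0, hn⟩
  induction x using WellFoundedLT.induction with
  | _ x ih =>
  obtain hx0 | hx0 := Nat.eq_zero_or_pos x
  · simp [show x = o from Fin.ext hx0, o]
  obtain ⟨y, hy⟩ : ∃ y, (π y : ℕ) = π o - x := ⟨π.symm ⟨π o - x, by omega⟩, by simp⟩
  have hxy : x ≤ y := by
    by_contra! hyx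
    have := ih y hyx (by omega)
    exact hyx.ne' (Fin.ext (by omega))
  obtain rfl | hxy := hxy.eq_or_lt
  · omega
  -- If `y ≠ x`, the entries at `o < x < y` form 312 or 231, unless `π x = π o - j` for some
  -- `j < x`; but by induction that value sits at position `j`.
  exfalso
  have hox : o < x := Fin.lt_def.2 hx0
  have hyo : π y < π o := Fin.lt_def.2 (by omega)
  rcases lt_trichotomy (π x) (π y) with hlt | heq | hgt
  · exact h312 (containsPat_312 hox hxy hlt hyo)
  · exact hxy.ne (π.injective heq)
  by_cases hox' : π o < π x
  · exact h231 (containsPat_231 hox hxy hyo hox')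
  have hj : (⟨π o - π x, by omega⟩ : Fin n) < x := Fin.lt_def.2 (by simp; omega)
  have := ih _ hj (by simp)
  exact hj.ne (π.injective (Fin.ext (by simp at this ⊢; omega)))

theorem val_head_lt_three {n : ℕ} {π : Equiv.Perm (Fin n)} (hn : 0 < n)
    (h : AvoidsAll π [[2,3,1],[3,1,2],[4,3,2,1],[2,1,5,4,3]]) : (π ⟨0, hn⟩ : ℕ) < 3 := by
  by_contra! hc3
  have hc := (π ⟨0, hn⟩).isLt
  have hlayer : ∀ i (hi : i ≤ 3), (π ⟨i, by omega⟩ : ℕ) + i = π ⟨0, hn⟩ := fun i _ =>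
    val_add_val_eq_head (h _ (by simp)) (h _ (by simp)) hn ⟨i, by omega⟩ (by simp; omega)
  have h1 := hlayer 1 (by norm_num)
  have h2 := hlayer 2 (by norm_num)
  have h3 := hlayer 3 le_rfl
  exact h _ (by simp) (containsPat_4321 (a := ⟨0, hn⟩) (b := ⟨1, by omega⟩) (c := ⟨2, by omega⟩)
    (d := ⟨3, by omega⟩) (Fin.lt_def.2 (by simp)) (Fin.lt_def.2 (by simp)) (Fin.lt_def.2 (by simp))
    (Fin.lt_def.2 (by omega)) (Fin.lt_def.2 (by omega)) (Fin.lt_def.2 (by omega)))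

theorem val_head_lt_two {n : ℕ} {π : Equiv.Perm (Fin n)} (hn : 0 < n)
    (h : AvoidsAll π [[2,3,1],[3,1,2],[3,2,1]]) : (π ⟨0, hn⟩ : ℕ) < 2 := by
  by_contra! hc2
  have hc := (π ⟨0, hn⟩).isLt
  have hlayer : ∀ i (hi : i ≤ 2), (π ⟨i, by omega⟩ : ℕ) + i = π ⟨0, hn⟩ := fun i _ =>
    val_add_val_eq_head (h _ (by simp)) (h _ (by simp)) hn ⟨i, by omega⟩ (by simp; omega)
  have h1 := hlayer 1 (by norm_num)
  have h2 := hlayer 2 le_rfl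
  exact h _ (by simp) (containsPat_321 (a := ⟨0, hn⟩) (b := ⟨1, by omega⟩) (c := ⟨2, by omega⟩)
    (Fin.lt_def.2 (by simp)) (Fin.lt_def.2 (by simp)) (Fin.lt_def.2 (by omega))
    (Fin.lt_def.2 (by omega)))

section DirectSum

variable {k t : ℕ}

@[simp]
theorem dsum_castAdd (α : Equiv.Perm (Fin k)) (σ : Equiv.Perm (Fin t)) (x : Fin k) :
    dsum α σ (Fin.castAdd t x) = Fin.castAdd t (α x) := by
  simp [dsum]

@[simp]
theorem dsum_natAdd (α : Equiv.Perm (Fin k)) (σ : Equiv.Perm (Fin t)) (y : Fin t) :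
    dsum α σ (Fin.natAdd k y) = Fin.natAdd k (σ y) := by
  simp [dsum]

theorem dsum_injective (α : Equiv.Perm (Fin k)) :
    Function.Injective (dsum α : Equiv.Perm (Fin t) → Equiv.Perm (Fin (k + t))) := by
  intro σ σ' h
  ext y
  simpa using congrArg (fun π => (π (Fin.natAdd k y) : ℕ)) h

theorem exists_dsum_eq {α : Equiv.Perm (Fin k)} {π : Equiv.Perm (Fin (k + t))}
    (h : ∀ x, π (Fin.castAdd t x) = Fin.castAdd t (α x)) : ∃ σ, dsum α σ = π := by
  set ρ : Equiv.Perm (Fin k ⊕ Fin t) := (finSumFinEquiv.trans π).trans finSumFinEquiv.symm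
  obtain ⟨⟨α', σ⟩, hασ⟩ := Equiv.Perm.mem_sumCongrHom_range_of_perm_mapsTo_inl (σ := ρ)
    (by rintro _ ⟨x, rfl⟩; exact ⟨α x, by simp [ρ, h]⟩)
  have hρ' : ∀ z, ρ z = Equiv.sumCongr α' σ z := fun z => by rw [← hασ]; rfl
  refine ⟨σ, Equiv.ext fun y => ?_⟩
  induction y using Fin.addCases with
  | left x => simp [h]
  | right y =>
    have := hρ' (Sum.inr y)
    simp only [ρ, Equiv.trans_apply, finSumFinEquiv_apply_right, Equiv.sumCongr_apply,
      Sum.map_inr, Equiv.symm_apply_eq] at this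
    simp [this]

theorem Fin.castAdd_lt_natAdd (x : Fin k) (y : Fin t) : Fin.castAdd t x < Fin.natAdd k y := by
  simp [Fin.lt_def]; omega

end DirectSum

section Transfer

variable {k t : ℕ} {σ : Equiv.Perm (Fin t)}

theorem containsPat_of_dsum {α : Equiv.Perm (Fin k)} {p : List ℕ} {f : Fin p.length → Fin (k + t)}
    (hf : StrictMono f) (hright : ∀ i, k ≤ (f i : ℕ))
    (hp : ∀ i j, p.get i < p.get j ↔ dsum α σ (f i) < dsum α σ (f j)) : ContainsPat σ p := by
  choose g hg using fun i => (⟨⟨f i - k, by have := hright i; omega⟩,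
    Fin.ext (by simp; have := hright i; omega)⟩ : ∃ y : Fin t, Fin.natAdd k y = f i)
  refine ⟨g, fun i j hij => ?_, fun i j => ?_⟩
  · rw [← Fin.natAdd_lt_natAdd_iff k, hg, hg]
    exact hf hij
  · rw [hp, ← hg i, ← hg j, dsum_natAdd, dsum_natAdd, Fin.natAdd_lt_natAdd_iff]

theorem ContainsPat.dsum (α : Equiv.Perm (Fin k)) {p : List ℕ} (h : ContainsPat σ p) :
    ContainsPat (dsum α σ) p := by
  obtain ⟨f, hf, hp⟩ := h
  refine ⟨fun i => Fin.natAdd k (f i), fun i j hij => ?_, fun i j => ?_⟩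
  · simpa using hf hij
  · simp only [dsum_natAdd, Fin.natAdd_lt_natAdd_iff]
    exact hp i j

theorem val_dsum_revPerm (σ : Equiv.Perm (Fin t)) (x : Fin (k + t)) :
    ((x : ℕ) < k → (dsum Fin.revPerm σ x : ℕ) + x + 1 = k) ∧
      (k ≤ (x : ℕ) → k ≤ (dsum Fin.revPerm σ x : ℕ)) := by
  induction x using Fin.addCases with
  | left x => simp [Fin.val_rev]; omega
  | right y => simp

theorem dsum_revPerm_lt_iff {x y : Fin (k + t)} (hxy : x < y) (hx : (x : ℕ) < k) :
    dsum Fin.revPerm σ x < dsum Fin.revPerm σ y ↔ k ≤ (y : ℕ) := by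
  have hx' := (val_dsum_revPerm σ x).1 hx
  have hy := val_dsum_revPerm σ y
  rw [Fin.lt_def] at hxy ⊢
  constructor
  · intro h
    by_contra! h'
    have := hy.1 h'
    omega
  · intro h
    have := hy.2 h
    omega

section Occurrence

variable {p : List ℕ} {f : Fin p.length → Fin (k + t)} (hf : StrictMono f)
  (hp : ∀ i j, p.get i < p.get j ↔ dsum Fin.revPerm σ (f i) < dsum Fin.revPerm σ (f j))
include hf hp

theorem le_of_occurrence_ascent {i j : Fin p.length} (hij : i < j) (h : p.get i < p.get j) :
    k ≤ (f j : ℕ) := by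
  by_cases hi : (f i : ℕ) < k
  · exact (dsum_revPerm_lt_iff (hf hij) hi).1 ((hp i j).1 h)
  · exact (not_lt.1 hi).trans (hf hij).le

theorem lt_of_occurrence_inversion {i j : Fin p.length} (hij : i < j) (h : p.get j < p.get i)
    (hi : (f i : ℕ) < k) : (f j : ℕ) < k := by
  by_contra! hj
  exact ((hp j i).1 h).asymm ((dsum_revPerm_lt_iff (hf hij) hi).2 hj)

end Occurrence

theorem containsPat_dsum_revPerm_iff {p : List ℕ} (hp : ∀ {f : Fin p.length → Fin (k + t)},
    StrictMono f →
    (∀ i j, p.get i < p.get j ↔ dsum Fin.revPerm σ (f i) < dsum Fin.revPerm σ (f j)) →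
    ∀ h : 0 < p.length, k ≤ (f ⟨0, h⟩ : ℕ)) :
    ContainsPat (dsum (Fin.revPerm : Equiv.Perm (Fin k)) σ) p ↔ ContainsPat σ p :=
  ⟨fun ⟨_, hf, hf'⟩ => containsPat_of_dsum hf
    (fun i => (hp hf hf' i.pos).trans (hf.monotone (Fin.le_def.2 (Nat.zero_le _)))) hf',
    ContainsPat.dsum _⟩

theorem containsPat_dsum_revPerm_231_iff :
    ContainsPat (dsum (Fin.revPerm : Equiv.Perm (Fin k)) σ) [2, 3, 1] ↔
      ContainsPat σ [2, 3, 1] := by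
  refine containsPat_dsum_revPerm_iff fun {f} hf hp _ => ?_
  by_contra! h0
  have h2 := lt_of_occurrence_inversion hf hp (i := 0) (j := 2) (by decide) (by decide) h0
  have h1 := le_of_occurrence_ascent hf hp (i := 0) (j := 1) (by decide) (by decide)
  have := hf (show (1 : Fin 3) < 2 by decide)
  rw [Fin.lt_def] at this
  omega

theorem containsPat_dsum_revPerm_312_iff :
    ContainsPat (dsum (Fin.revPerm : Equiv.Perm (Fin k)) σ) [3, 1, 2] ↔
      ContainsPat σ [3, 1, 2] := by
  refine containsPat_dsum_revPerm_iff fun {f} hf hp _ => ?_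
  by_contra! h0
  have h2 := lt_of_occurrence_inversion hf hp (i := 0) (j := 2) (by decide) (by decide) h0
  have h2' := le_of_occurrence_ascent hf hp (i := 1) (j := 2) (by decide) (by decide)
  omega

theorem containsPat_dsum_revPerm_321_iff (hk : k ≤ 2) :
    ContainsPat (dsum (Fin.revPerm : Equiv.Perm (Fin k)) σ) [3, 2, 1] ↔
      ContainsPat σ [3, 2, 1] := by
  refine containsPat_dsum_revPerm_iff fun {f} hf hp _ => ?_
  by_contra! h0
  have h2 := lt_of_occurrence_inversion hf hp (i := 0) (j := 2) (by decide) (by decide) h0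
  have h01 := hf (show (0 : Fin 3) < 1 by decide)
  have h12 := hf (show (1 : Fin 3) < 2 by decide)
  rw [Fin.lt_def] at h01 h12
  omega

theorem containsPat_dsum_revPerm_4321_iff (hk : k ≤ 3) :
    ContainsPat (dsum (Fin.revPerm : Equiv.Perm (Fin k)) σ) [4, 3, 2, 1] ↔
      ContainsPat σ [4, 3, 2, 1] := by
  refine containsPat_dsum_revPerm_iff fun {f} hf hp _ => ?_
  by_contra! h0
  have h3 := lt_of_occurrence_inversion hf hp (i := 0) (j := 3) (by decide) (by decide) h0
  have h01 := hf (show (0 : Fin 4) < 1 by decide)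
  have h12 := hf (show (1 : Fin 4) < 2 by decide)
  have h23 := hf (show (2 : Fin 4) < 3 by decide)
  rw [Fin.lt_def] at h01 h12 h23
  omega

theorem containsPat_dsum_revPerm_21543_iff (hk : k ≤ 1) :
    ContainsPat (dsum (Fin.revPerm : Equiv.Perm (Fin k)) σ) [2, 1, 5, 4, 3] ↔
      ContainsPat σ [2, 1, 5, 4, 3] := by
  refine containsPat_dsum_revPerm_iff fun {f} hf hp _ => ?_
  by_contra! h0
  have h1 := lt_of_occurrence_inversion hf hp (i := 0) (j := 1) (by decide) (by decide) h0
  have h01 := hf (show (0 : Fin 5) < 1 by decide)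
  rw [Fin.lt_def] at h01
  omega

theorem containsPat_dsum_revPerm_21543_iff_321 (hk : 2 ≤ k) :
    ContainsPat (dsum (Fin.revPerm : Equiv.Perm (Fin k)) σ) [2, 1, 5, 4, 3] ↔
      ContainsPat σ [3, 2, 1] := by
  constructor
  · rintro ⟨f, hf, hp⟩
    have h2 := le_of_occurrence_ascent hf hp (i := 0) (j := 2) (by decide) (by decide)
    have h23 := hf (show (2 : Fin 5) < 3 by decide)
    have h34 := hf (show (3 : Fin 5) < 4 by decide)
    rw [Fin.lt_def] at h23 h34
    let e : Fin 3 → Fin [2, 1, 5, 4, 3].length := ![2, 3, 4]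
    refine containsPat_of_dsum (α := Fin.revPerm) (f := f ∘ e)
      (hf.comp (Fin.strictMono_iff_lt_succ.2 fun i => by fin_cases i <;> decide))
      (fun i => by fin_cases i <;> simp [e] <;> omega) (fun i j => ?_)
    have := hp (e i) (e j)
    fin_cases i <;> fin_cases j <;> simp [e] at this ⊢ <;> exact this
  · rintro ⟨g, hg, hp⟩
    have hτ : ∀ x : Fin k, (dsum Fin.revPerm σ (Fin.castAdd t x) : ℕ) = k - 1 - x := by
      intro x
      simp [Fin.val_rev]
      omega
    refine containsPat_21543 (a := Fin.castAdd t ⟨0, by omega⟩) (b := Fin.castAdd t ⟨1, by omega⟩)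
      (c := Fin.natAdd k (g 0)) (d := Fin.natAdd k (g 1)) (e := Fin.natAdd k (g 2))
      (Fin.lt_def.2 (by simp)) (Fin.castAdd_lt_natAdd _ _) ?_ ?_ (Fin.lt_def.2 ?_) ?_ ?_ ?_
    · exact (Fin.natAdd_lt_natAdd_iff k).2 (hg (by decide))
    · exact (Fin.natAdd_lt_natAdd_iff k).2 (hg (by decide))
    · rw [hτ, hτ]
      simp
      omega
    · rw [dsum_castAdd, dsum_natAdd]
      exact Fin.castAdd_lt_natAdd _ _
    · simpa using (hp 2 1).1 (by decide)
    · simpa using (hp 1 0).1 (by decide)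

theorem containsPat_321_of_containsPat_4321 {n : ℕ} {π : Equiv.Perm (Fin n)}
    (h : ContainsPat π [4, 3, 2, 1]) : ContainsPat π [3, 2, 1] := by
  obtain ⟨f, hf, hp⟩ := h
  exact containsPat_321 (hf (show (0 : Fin 4) < 1 by decide)) (hf (show (1 : Fin 4) < 2 by decide))
    ((hp 1 0).1 (by decide)) ((hp 2 1).1 (by decide))

theorem avoidsAll_dsum_revPerm_iff_of_le_one (hk : k ≤ 1) :
    AvoidsAll (dsum (Fin.revPerm : Equiv.Perm (Fin k)) σ) [[2,3,1],[3,1,2],[4,3,2,1],[2,1,5,4,3]] ↔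
      AvoidsAll σ [[2,3,1],[3,1,2],[4,3,2,1],[2,1,5,4,3]] := by
  simp [AvoidsAll, containsPat_dsum_revPerm_231_iff, containsPat_dsum_revPerm_312_iff,
    containsPat_dsum_revPerm_4321_iff (hk.trans (by norm_num)),
    containsPat_dsum_revPerm_21543_iff hk]

theorem avoidsAll_dsum_revPerm_iff_of_two_le (hk : 2 ≤ k) (hk' : k ≤ 3) :
    AvoidsAll (dsum (Fin.revPerm : Equiv.Perm (Fin k)) σ) [[2,3,1],[3,1,2],[4,3,2,1],[2,1,5,4,3]] ↔
      AvoidsAll σ [[2,3,1],[3,1,2],[3,2,1]] := by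
  simp only [AvoidsAll, List.forall_mem_cons, List.not_mem_nil, IsEmpty.forall_iff, implies_true,
    and_true, containsPat_dsum_revPerm_231_iff, containsPat_dsum_revPerm_312_iff,
    containsPat_dsum_revPerm_4321_iff hk', containsPat_dsum_revPerm_21543_iff_321 hk]
  exact ⟨fun h => ⟨h.1, h.2.1, h.2.2.2⟩,
    fun h => ⟨h.1, h.2.1, fun h' => h.2.2 (containsPat_321_of_containsPat_4321 h'), h.2.2⟩⟩

theorem avoidsAll_dsum_revPerm_fib_iff (hk : k ≤ 2) :
    AvoidsAll (dsum (Fin.revPerm : Equiv.Perm (Fin k)) σ) [[2,3,1],[3,1,2],[3,2,1]] ↔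
      AvoidsAll σ [[2,3,1],[3,1,2],[3,2,1]] := by
  simp [AvoidsAll, containsPat_dsum_revPerm_231_iff, containsPat_dsum_revPerm_312_iff,
    containsPat_dsum_revPerm_321_iff hk]

end Transfer

section Counting

noncomputable def avoiders (S : List (List ℕ)) (n : ℕ) : Finset (Equiv.Perm (Fin n)) :=
  {π | AvoidsAll π S}

variable {S : List (List ℕ)} {n : ℕ}

theorem card_avoiders_of_lt_length (h : ∀ p ∈ S, n < p.length) : #(avoiders S n) = n.factorial := by
  rw [avoiders, filter_true_of_mem fun π _ p hp hc => (h p hp).not_ge hc.length_le, card_univ,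
    Fintype.card_perm, Fintype.card_fin]

theorem card_avoiders_eq_sum (hn : 0 < n) (m : ℕ)
    (h : ∀ π : Equiv.Perm (Fin n), AvoidsAll π S → (π ⟨0, hn⟩ : ℕ) < m) :
    #(avoiders S n) = ∑ c ∈ range m, #{π ∈ avoiders S n | (π ⟨0, hn⟩ : ℕ) = c} :=
  card_eq_sum_card_fiberwise fun π hπ => mem_range.2 (h π (by simpa [avoiders] using hπ))

theorem card_avoiders_head_eq {S' : List (List ℕ)} (h231 : [2, 3, 1] ∈ S) (h312 : [3, 1, 2] ∈ S)
    {c t : ℕ} (hn : 0 < n) (hnct : n = c + 1 + t)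
    (hS : ∀ σ : Equiv.Perm (Fin t),
      AvoidsAll (dsum (Fin.revPerm : Equiv.Perm (Fin (c + 1))) σ) S ↔ AvoidsAll σ S') :
    #{π ∈ avoiders S n | (π ⟨0, hn⟩ : ℕ) = c} = #(avoiders S' t) := by
  subst hnct
  have h0 : (⟨0, hn⟩ : Fin (c + 1 + t)) = Fin.castAdd t 0 := rfl
  symm
  refine card_bij (fun σ _ => dsum Fin.revPerm σ) (fun σ hσ => ?_)
    (fun σ _ σ' _ h => dsum_injective _ h) (fun π hπ => ?_)
  · simp only [avoiders, mem_filter, mem_univ, true_and] at hσ ⊢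
    simp [h0, (hS σ).2 hσ]
  · simp only [avoiders, mem_filter, mem_univ, true_and] at hπ
    obtain ⟨σ, rfl⟩ := exists_dsum_eq (α := Fin.revPerm) (π := π) fun x => Fin.ext (by
      have := val_add_val_eq_head (hπ.1 _ h231) (hπ.1 _ h312) hn (Fin.castAdd t x)
        (by rw [hπ.2]; simp; omega)
      rw [hπ.2] at this
      simp only [Fin.val_castAdd, Fin.revPerm_apply, Fin.val_rev] at this ⊢
      omega)
    exact ⟨σ, by simpa [avoiders] using (hS σ).1 hπ.1, rfl⟩

theorem card_avoiders_fib_add_two (t : ℕ) :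
    #(avoiders [[2,3,1],[3,1,2],[3,2,1]] (t + 2)) =
      #(avoiders [[2,3,1],[3,1,2],[3,2,1]] (t + 1)) +
        #(avoiders [[2,3,1],[3,1,2],[3,2,1]] t) := by
  have hn : 0 < t + 2 := by omega
  rw [card_avoiders_eq_sum hn 2 fun π => val_head_lt_two hn, sum_range_succ, sum_range_one,
    card_avoiders_head_eq (c := 0) (t := t + 1) (by simp) (by simp) hn (by omega)
      fun σ => avoidsAll_dsum_revPerm_fib_iff (by norm_num),
    card_avoiders_head_eq (c := 1) (t := t) (by simp) (by simp) hn (by omega)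
      fun σ => avoidsAll_dsum_revPerm_fib_iff le_rfl]

theorem card_avoiders_add_three (t : ℕ) :
    #(avoiders [[2,3,1],[3,1,2],[4,3,2,1],[2,1,5,4,3]] (t + 3)) =
      #(avoiders [[2,3,1],[3,1,2],[4,3,2,1],[2,1,5,4,3]] (t + 2)) +
        #(avoiders [[2,3,1],[3,1,2],[3,2,1]] (t + 1)) + #(avoiders [[2,3,1],[3,1,2],[3,2,1]] t) := by
  have hn : 0 < t + 3 := by omega
  rw [card_avoiders_eq_sum hn 3 fun π => val_head_lt_three hn, sum_range_succ, sum_range_succ,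
    sum_range_one,
    card_avoiders_head_eq (c := 0) (t := t + 2) (by simp) (by simp) hn (by omega)
      fun σ => avoidsAll_dsum_revPerm_iff_of_le_one le_rfl,
    card_avoiders_head_eq (c := 1) (t := t + 1) (by simp) (by simp) hn (by omega)
      fun σ => avoidsAll_dsum_revPerm_iff_of_two_le le_rfl (by norm_num),
    card_avoiders_head_eq (c := 2) (t := t) (by simp) (by simp) hn (by omega)
      fun σ => avoidsAll_dsum_revPerm_iff_of_two_le (by norm_num) le_rfl]

end Counting

theorem fib'_pos (n : ℕ) : 0 < fib' n := by
  induction n using fib'.induct with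
  | case1 => exact Nat.one_pos
  | case2 => exact Nat.one_pos
  | case3 n ih _ => rw [fib']; omega

theorem card_avoiders_fib : ∀ t, #(avoiders [[2,3,1],[3,1,2],[3,2,1]] t) = fib' t
  | 0 => card_avoiders_of_lt_length (by simp)
  | 1 => card_avoiders_of_lt_length (by simp)
  | t + 2 => by rw [card_avoiders_fib_add_two, card_avoiders_fib (t + 1), card_avoiders_fib t]; rfl

theorem card_avoiders_eq_fib'_sub_one :
    ∀ n, #(avoiders [[2,3,1],[3,1,2],[4,3,2,1],[2,1,5,4,3]] (n + 1)) = fib' (n + 2) - 1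
  | 0 => card_avoiders_of_lt_length (by simp)
  | 1 => card_avoiders_of_lt_length (by simp)
  | t + 2 => by
    rw [card_avoiders_add_three, card_avoiders_eq_fib'_sub_one (t + 1), card_avoiders_fib,
      card_avoiders_fib]
    have := fib'_pos (t + 1)
    simp only [fib']
    omega

theorem stmt0 (n : ℕ) (hn : 1 ≤ n) :
    {π : Equiv.Perm (Fin n) | AvoidsAll π [[2,3,1],[3,1,2],[4,3,2,1],[2,1,5,4,3]]}.ncard = fib' (n + 1) - 1 := by
  obtain ⟨m, rfl⟩ := Nat.exists_eq_add_of_le' hn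
  rw [← card_avoiders_eq_fib'_sub_one, ← Set.ncard_coe_finset, avoiders, coe_filter]
  simp
end

section
/- For all n ≥ 1, the number of permutations of length n avoiding all of the patterns 231, 312, and 1432 equals F_{n+1} - 1, where F is the Fibonacci sequence with F_0 = F_1 = 1. -/
open Finset MvPolynomial
open scoped Classical

-- dsum evaluation
lemma my_dsum_castAdd {m k : ℕ} (σ : Equiv.Perm (Fin m)) (τ : Equiv.Perm (Fin k)) (i : Fin m) :
    dsum σ τ (Fin.castAdd k i) = Fin.castAdd k (σ i) := by
  simp [dsum, finSumFinEquiv_symm_apply_castAdd]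

lemma my_dsum_natAdd {m k : ℕ} (σ : Equiv.Perm (Fin m)) (τ : Equiv.Perm (Fin k)) (j : Fin k) :
    dsum σ τ (Fin.natAdd m j) = Fin.natAdd m (τ j) := by
  simp [dsum, finSumFinEquiv_symm_apply_natAdd]

lemma my_containsPat_dsum_left {m k : ℕ} (σ : Equiv.Perm (Fin m)) (τ : Equiv.Perm (Fin k))
    (p : List ℕ) (h : ContainsPat σ p) : ContainsPat (dsum σ τ) p := by
  obtain ⟨f, hf, hiff⟩ := h
  refine ⟨fun i => Fin.castAdd k (f i), ?_, ?_⟩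
  · intro a b hab
    have := hf hab
    simp only [Fin.lt_def, Fin.coe_castAdd]
    exact this
  · intro i j
    rw [hiff i j]
    simp only [my_dsum_castAdd, Fin.lt_def, Fin.coe_castAdd]

-- strict mono stepping
lemma my_step {a b : ℕ} {f : Fin a → Fin b} (hf : StrictMono f) :
    ∀ d (i j : Fin a), (j : ℕ) = (i : ℕ) + d → (f i : ℕ) + d ≤ (f j : ℕ) := by
  intro d
  induction d with
  | zero => intro i j h; have : i = j := Fin.ext (by omega); subst this; omega
  | succ d ih =>
    intro i j h
    have hj' : (i : ℕ) + d < a := by have := j.isLt; omega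
    have h1 := ih i ⟨(i : ℕ) + d, hj'⟩ rfl
    have h2 : f ⟨(i : ℕ) + d, hj'⟩ < f j := hf (by simp [Fin.lt_def]; omega)
    have h3 := Fin.lt_def.mp h2
    omega

lemma my_down {m k : ℕ} (σ : Equiv.Perm (Fin m)) (τ : Equiv.Perm (Fin k))
    (hτ : ∀ i j : Fin k, i < j → τ j < τ i) (p : List ℕ)
    (h : ContainsPat (dsum σ τ) p) :
    ContainsPat σ p ∨
      ∃ T : Fin p.length,
        p.length ≤ (T : ℕ) + k ∧
        (∀ i j : Fin p.length, (i : ℕ) < (T : ℕ) → (T : ℕ) ≤ (j : ℕ) → p.get i < p.get j) ∧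
        (∀ i j : Fin p.length, (T : ℕ) ≤ (i : ℕ) → i < j → p.get j < p.get i) := by
  obtain ⟨f, hf, hiff⟩ := h
  by_cases hall : ∀ i, (f i : ℕ) < m
  · left
    refine ⟨fun i => ⟨f i, hall i⟩, ?_, ?_⟩
    · intro a b hab
      exact Fin.mk_lt_mk.mpr (Fin.lt_def.mp (hf hab))
    · intro i j
      rw [hiff i j]
      have e : ∀ i, (dsum σ τ) (f i) = Fin.castAdd k (σ ⟨f i, hall i⟩) := by
        intro i
        have hfi : f i = Fin.castAdd k ⟨f i, hall i⟩ := by ext; simp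
        conv_lhs => rw [hfi, my_dsum_castAdd]
      rw [e i, e j]
      simp only [Fin.lt_def, Fin.coe_castAdd]
  · right
    push_neg at hall
    set s : Finset (Fin p.length) := Finset.univ.filter (fun i => m ≤ (f i : ℕ)) with hs
    have hne : s.Nonempty := by
      obtain ⟨i, hi⟩ := hall
      exact ⟨i, by simp [hs]; omega⟩
    set T := s.min' hne with hT
    have hTmem : m ≤ (f T : ℕ) := by
      have := s.min'_mem hne; simp [hs] at this; exact this
    have hTmin : ∀ i : Fin p.length, m ≤ (f i : ℕ) → T ≤ i := by
      intro i hi; exact s.min'_le i (by simp [hs]; omega)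
    have hlow : ∀ i : Fin p.length, (i : ℕ) < (T : ℕ) → (f i : ℕ) < m := by
      intro i hi
      by_contra hc
      have := hTmin i (by omega)
      rw [Fin.le_def] at this; omega
    have hhigh : ∀ j : Fin p.length, (T : ℕ) ≤ (j : ℕ) → m ≤ (f j : ℕ) := by
      intro j hj
      have : f T ≤ f j := hf.le_iff_le.mpr (Fin.le_def.mpr hj)
      rw [Fin.le_def] at this; omega
    -- values of dsum on low and high positions
    have vlow : ∀ i : Fin p.length, (i : ℕ) < (T : ℕ) → ((dsum σ τ) (f i) : ℕ) < m := by
      intro i hi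
      have h1 : f i = Fin.castAdd k ⟨f i, hlow i hi⟩ := by ext; simp
      rw [h1, my_dsum_castAdd]
      simp
    have vhigh : ∀ j : Fin p.length, (T : ℕ) ≤ (j : ℕ) → m ≤ ((dsum σ τ) (f j) : ℕ) := by
      intro j hj
      have hm := hhigh j hj
      have h1 : f j = Fin.natAdd m ⟨(f j : ℕ) - m, by have := (f j).isLt; omega⟩ := by
        ext; simp; omega
      rw [h1, my_dsum_natAdd]
      simp
    refine ⟨T, ?_, ?_, ?_⟩
    · -- length bound
      have hL : p.length - 1 < p.length := by have := T.isLt; omega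
      have hstep := my_step hf ((p.length - 1) - (T : ℕ)) T ⟨p.length - 1, hL⟩ (by simp; have := T.isLt; omega)
      have := (f ⟨p.length - 1, hL⟩).isLt
      omega
    · intro i j hi hj
      rw [hiff i j, Fin.lt_def]
      have := vlow i hi
      have := vhigh j hj
      omega
    · intro i j hi hij
      have hj : (T : ℕ) ≤ (j : ℕ) := by have := Fin.lt_def.mp hij; omega
      have hmi := hhigh i hi
      have hmj := hhigh j hj
      have e : ∀ (x : Fin p.length) (hx : m ≤ (f x : ℕ)),
          (dsum σ τ) (f x) = Fin.natAdd m (τ ⟨(f x : ℕ) - m, by have := (f x).isLt; omega⟩) := by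
        intro x hx
        have h1 : f x = Fin.natAdd m ⟨(f x : ℕ) - m, by have := (f x).isLt; omega⟩ := by
          ext; simp; omega
        conv_lhs => rw [h1, my_dsum_natAdd]
      rw [hiff j i, e i hmi, e j hmj]
      simp only [Fin.lt_def, Fin.coe_natAdd]
      have hττ : τ ⟨(f j : ℕ) - m, by have := (f j).isLt; omega⟩ < τ ⟨(f i : ℕ) - m, by have := (f i).isLt; omega⟩ := by
        apply hτ
        have := Fin.lt_def.mp (hf hij)
        simp [Fin.lt_def]
        omega
      have := Fin.lt_def.mp hττ
      omega

abbrev myPats : List (List ℕ) := [[2,3,1],[3,1,2],[1,4,3,2]]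

lemma my_avoid_dsum {m k : ℕ} (σ : Equiv.Perm (Fin m)) (τ : Equiv.Perm (Fin k))
    (hτ : ∀ i j : Fin k, i < j → τ j < τ i) (hk : k ≤ 2)
    (hσ : AvoidsAll σ myPats) : AvoidsAll (dsum σ τ) myPats := by
  intro p hp hcont
  rcases my_down σ τ hτ p hcont with hc | ⟨T, hlen, h1, h2⟩
  · exact hσ p hp hc
  · simp only [myPats, List.mem_cons, List.not_mem_nil, or_false] at hp
    rcases hp with rfl | rfl | rfl
    · -- [2,3,1]
      have hT := T.isLt
      simp only [List.length_cons, List.length_nil] at hT hlen h1 h2 ⊢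
      interval_cases hTv : (T : ℕ)
      · have := h2 ⟨0, by omega⟩ ⟨1, by omega⟩ (by simp [hTv]) (by simp [Fin.lt_def])
        simp [List.get] at this
      · have := h2 ⟨1, by omega⟩ ⟨2, by omega⟩ (by simp [hTv]) (by simp [Fin.lt_def])
        have h3 := h1 ⟨0, by omega⟩ ⟨2, by omega⟩ (by simp [hTv]) (by simp [hTv])
        simp [List.get] at this h3
      · have := h1 ⟨0, by omega⟩ ⟨2, by omega⟩ (by simp [hTv]) (by simp [hTv])
        simp [List.get] at this
    · -- [3,1,2]
      have hT := T.isLt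
      simp only [List.length_cons, List.length_nil] at hT hlen h1 h2 ⊢
      interval_cases hTv : (T : ℕ)
      · have := h2 ⟨1, by omega⟩ ⟨2, by omega⟩ (by simp [hTv]) (by simp [Fin.lt_def])
        simp [List.get] at this
      · have := h1 ⟨0, by omega⟩ ⟨1, by omega⟩ (by simp [hTv]) (by simp [hTv])
        simp [List.get] at this
      · have := h1 ⟨0, by omega⟩ ⟨2, by omega⟩ (by simp [hTv]) (by simp [hTv])
        simp [List.get] at this
    · -- [1,4,3,2]
      have hT := T.isLt
      simp only [List.length_cons, List.length_nil] at hT hlen h1 h2 ⊢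
      interval_cases hTv : (T : ℕ)
      · have := h2 ⟨0, by omega⟩ ⟨1, by omega⟩ (by simp [hTv]) (by simp [Fin.lt_def])
        simp [List.get] at this
      · omega
      · have := h1 ⟨1, by omega⟩ ⟨2, by omega⟩ (by simp [hTv]) (by simp [hTv])
        simp [List.get] at this
      · have := h1 ⟨1, by omega⟩ ⟨3, by omega⟩ (by simp [hTv]) (by simp [hTv])
        simp [List.get] at this

lemma my_rev_not_contains {n : ℕ} (p : List ℕ) (a b : Fin p.length)
    (hab : a < b) (hpab : p.get a < p.get b) :
    ¬ ContainsPat (Fin.revPerm : Equiv.Perm (Fin n)) p := by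
  rintro ⟨f, hf, hiff⟩
  have h1 := (hiff a b).mp hpab
  simp only [Fin.revPerm_apply, Fin.rev_lt_rev] at h1
  exact absurd (hf hab) (by exact lt_asymm h1)

lemma my_rev_avoids {n : ℕ} : AvoidsAll (Fin.revPerm : Equiv.Perm (Fin n)) myPats := by
  intro p hp
  simp only [myPats, List.mem_cons, List.not_mem_nil, or_false] at hp
  rcases hp with rfl | rfl | rfl
  · exact my_rev_not_contains _ ⟨0, by norm_num⟩ ⟨1, by norm_num⟩ (by simp [Fin.lt_def]) (by simp [List.get])
  · exact my_rev_not_contains _ ⟨1, by norm_num⟩ ⟨2, by norm_num⟩ (by simp [Fin.lt_def]) (by simp [List.get])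
  · exact my_rev_not_contains _ ⟨0, by norm_num⟩ ⟨1, by norm_num⟩ (by simp [Fin.lt_def]) (by simp [List.get])

lemma my_contains231 {n : ℕ} (π : Equiv.Perm (Fin n)) (a b c : Fin n)
    (hab : a < b) (hbc : b < c) (h1 : π c < π a) (h2 : π a < π b) :
    ContainsPat π [2,3,1] := by
  have Hab := Fin.lt_def.mp hab
  have Hbc := Fin.lt_def.mp hbc
  have H1 := Fin.lt_def.mp h1
  have H2 := Fin.lt_def.mp h2
  refine ⟨fun i => if (i:ℕ) = 0 then a else if (i:ℕ) = 1 then b else c, ?_, ?_⟩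
  · rintro ⟨iv, hi⟩ ⟨jv, hj⟩ hij
    simp only [List.length_cons, List.length_nil] at hi hj
    have hij' : iv < jv := Fin.lt_def.mp hij
    rw [Fin.lt_def]
    interval_cases iv <;> interval_cases jv <;> simp <;> omega
  · rintro ⟨iv, hi⟩ ⟨jv, hj⟩
    simp only [List.length_cons, List.length_nil] at hi hj
    rw [Fin.lt_def]
    interval_cases iv <;> interval_cases jv <;> simp [List.get] <;> omega

lemma my_contains312 {n : ℕ} (π : Equiv.Perm (Fin n)) (a b c : Fin n)
    (hab : a < b) (hbc : b < c) (h1 : π b < π c) (h2 : π c < π a) :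
    ContainsPat π [3,1,2] := by
  have Hab := Fin.lt_def.mp hab
  have Hbc := Fin.lt_def.mp hbc
  have H1 := Fin.lt_def.mp h1
  have H2 := Fin.lt_def.mp h2
  refine ⟨fun i => if (i:ℕ) = 0 then a else if (i:ℕ) = 1 then b else c, ?_, ?_⟩
  · rintro ⟨iv, hi⟩ ⟨jv, hj⟩ hij
    simp only [List.length_cons, List.length_nil] at hi hj
    have hij' : iv < jv := Fin.lt_def.mp hij
    rw [Fin.lt_def]
    interval_cases iv <;> interval_cases jv <;> simp <;> omega
  · rintro ⟨iv, hi⟩ ⟨jv, hj⟩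
    simp only [List.length_cons, List.length_nil] at hi hj
    rw [Fin.lt_def]
    interval_cases iv <;> interval_cases jv <;> simp [List.get] <;> omega

lemma my_contains1432 {n : ℕ} (π : Equiv.Perm (Fin n)) (a b c d : Fin n)
    (hab : a < b) (hbc : b < c) (hcd : c < d)
    (h1 : π a < π d) (h2 : π d < π c) (h3 : π c < π b) :
    ContainsPat π [1,4,3,2] := by
  have Hab := Fin.lt_def.mp hab
  have Hbc := Fin.lt_def.mp hbc
  have Hcd := Fin.lt_def.mp hcd
  have H1 := Fin.lt_def.mp h1
  have H2 := Fin.lt_def.mp h2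
  have H3 := Fin.lt_def.mp h3
  refine ⟨fun i => if (i:ℕ) = 0 then a else if (i:ℕ) = 1 then b else
      if (i:ℕ) = 2 then c else d, ?_, ?_⟩
  · rintro ⟨iv, hi⟩ ⟨jv, hj⟩ hij
    simp only [List.length_cons, List.length_nil] at hi hj
    have hij' : iv < jv := Fin.lt_def.mp hij
    rw [Fin.lt_def]
    interval_cases iv <;> interval_cases jv <;> simp <;> omega
  · rintro ⟨iv, hi⟩ ⟨jv, hj⟩
    simp only [List.length_cons, List.length_nil] at hi hj
    rw [Fin.lt_def]
    interval_cases iv <;> interval_cases jv <;> simp [List.get] <;> omega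

lemma my_restrict {m k : ℕ} (π : Equiv.Perm (Fin (m + k)))
    (h : ∀ i : Fin (m + k), m ≤ (i : ℕ) → m ≤ ((π i) : ℕ)) :
    ∃ σ : Equiv.Perm (Fin m), ∀ i : Fin m, π (Fin.castAdd k i) = Fin.castAdd k (σ i) := by
  have hlow : ∀ i : Fin (m + k), (i : ℕ) < m → ((π i) : ℕ) < m := by
    intro i hi
    by_contra hc
    push_neg at hc
    set t : Finset (Fin (m + k)) := Finset.univ.filter (fun x => m ≤ (x : ℕ)) with ht
    have hsurj := Finset.surj_on_of_inj_on_of_card_le (s := t) (t := t)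
      (fun a _ => π a) (fun a ha => by simp [ht] at ha ⊢; exact h a ha)
      (fun a₁ a₂ _ _ hh => π.injective hh) le_rfl
    obtain ⟨a, ha, hae⟩ := hsurj (π i) (by simp [ht]; exact hc)
    have : i = a := π.injective hae
    subst this
    simp [ht] at ha
    omega
  have hgl : ∀ i : Fin m, ((π (Fin.castAdd k i)) : ℕ) < m := by
    intro i; exact hlow _ (by simp)
  let g : Fin m → Fin m := fun i => ⟨(π (Fin.castAdd k i) : ℕ), hgl i⟩
  have ginj : Function.Injective g := by
    intro i j hij
    have : π (Fin.castAdd k i) = π (Fin.castAdd k j) := by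
      have := congrArg Fin.val hij
      simp only [g] at this
      exact Fin.ext this
    have := π.injective this
    have := congrArg Fin.val this
    simp only [Fin.coe_castAdd] at this
    exact Fin.ext this
  refine ⟨Equiv.ofBijective g (Finite.injective_iff_bijective.mp ginj), ?_⟩
  intro i
  ext
  simp [Equiv.ofBijective, g]

lemma my_eq_e1 {m : ℕ} (π : Equiv.Perm (Fin (m + 1)))
    (hl : ((π ⟨m, Nat.lt_succ_self m⟩) : ℕ) = m) :
    ∃ σ : Equiv.Perm (Fin m), π = dsum σ 1 := by
  have hmlt : m < m + 1 := Nat.lt_succ_self m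
  obtain ⟨σ, hσ⟩ := my_restrict (k := 1) π (by
    intro i hi
    have hie : i = ⟨m, hmlt⟩ := Fin.ext (by simpa using (by have := i.isLt; omega : (i:ℕ) = m))
    rw [hie]
    omega)
  refine ⟨σ, ?_⟩
  ext x
  rcases Nat.lt_or_ge (x : ℕ) m with hx | hx
  · have hxe : x = Fin.castAdd 1 ⟨(x : ℕ), hx⟩ := Fin.ext (by simp)
    rw [hxe, hσ, my_dsum_castAdd]
  · have hxe : x = ⟨m, hmlt⟩ := Fin.ext (by simpa using (by have := x.isLt; omega : (x:ℕ) = m))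
    subst hxe
    have h2 : (⟨m, hmlt⟩ : Fin (m+1)) = Fin.natAdd m (0 : Fin 1) := Fin.ext (by simp)
    conv_rhs => rw [h2, my_dsum_natAdd]
    rw [hl]
    simp

def decPerm2 : Equiv.Perm (Fin 2) := Equiv.swap 0 1

lemma my_eq_e2 {m : ℕ} (π : Equiv.Perm (Fin (m + 2)))
    (hl1 : ((π ⟨m, by omega⟩) : ℕ) = m + 1) (hl2 : ((π ⟨m + 1, by omega⟩) : ℕ) = m) :
    ∃ σ : Equiv.Perm (Fin m), π = dsum σ decPerm2 := by
  have hm1 : m < m + 2 := by omega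
  have hm2 : m + 1 < m + 2 := by omega
  have hl1' : ((π ⟨m, hm1⟩) : ℕ) = m + 1 := hl1
  have hl2' : ((π ⟨m + 1, hm2⟩) : ℕ) = m := hl2
  obtain ⟨σ, hσ⟩ := my_restrict (k := 2) π (by
    intro i hi
    rcases Nat.lt_or_ge (i : ℕ) (m + 1) with hx | hx
    · have hie : i = ⟨m, hm1⟩ := Fin.ext (by simpa using (by omega : (i:ℕ) = m))
      rw [hie, hl1']; omega
    · have hie : i = ⟨m + 1, hm2⟩ := Fin.ext (by simpa using (by have := i.isLt; omega : (i:ℕ) = m + 1))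
      rw [hie, hl2'])
  refine ⟨σ, ?_⟩
  ext x
  rcases Nat.lt_or_ge (x : ℕ) m with hx | hx
  · have hxe : x = Fin.castAdd 2 ⟨(x : ℕ), hx⟩ := Fin.ext (by simp)
    rw [hxe, hσ, my_dsum_castAdd]
  · rcases Nat.lt_or_ge (x : ℕ) (m + 1) with hx2 | hx2
    · have hxe : x = ⟨m, hm1⟩ := Fin.ext (by simpa using (by omega : (x:ℕ) = m))
      subst hxe
      have h2 : (⟨m, hm1⟩ : Fin (m+2)) = Fin.natAdd m (0 : Fin 2) := Fin.ext (by simp)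
      conv_rhs => rw [h2, my_dsum_natAdd]
      rw [hl1']
      simp [decPerm2, Equiv.swap_apply_left]
    · have hxe : x = ⟨m + 1, hm2⟩ := Fin.ext (by simpa using (by have := x.isLt; omega : (x:ℕ) = m + 1))
      subst hxe
      have h2 : (⟨m + 1, hm2⟩ : Fin (m+2)) = Fin.natAdd m (1 : Fin 2) := Fin.ext (by simp)
      conv_rhs => rw [h2, my_dsum_natAdd]
      rw [hl2']
      simp [decPerm2, Equiv.swap_apply_right]

set_option maxHeartbeats 1000000 in
lemma my_decomp {m : ℕ} (hm : 1 ≤ m) (π : Equiv.Perm (Fin (m + 2)))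
    (hπ : AvoidsAll π myPats) :
    π = Fin.revPerm ∨
      (∃ σ : Equiv.Perm (Fin (m + 1)), π = dsum σ (1 : Equiv.Perm (Fin 1))) ∨
      (∃ σ : Equiv.Perm (Fin m), π = dsum σ decPerm2) := by
  have h231 := hπ [2,3,1] (by simp [myPats])
  have h312 := hπ [3,1,2] (by simp [myPats])
  have h1432 := hπ [1,4,3,2] (by simp [myPats])
  set P : Fin (m + 2) := π⁻¹ (Fin.last (m + 1)) with hP
  have hPval : π P = Fin.last (m + 1) := by simp [hP]
  have hmax : ∀ x : Fin (m + 2), x ≠ P → (π x : ℕ) < m + 1 := by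
    intro x hx
    have h1 : π x ≠ Fin.last (m + 1) := by
      intro hc
      exact hx (by rw [← hPval] at hc; exact π.injective hc)
    have h2 := (π x).isLt
    have : (π x : ℕ) ≠ m + 1 := fun hc => h1 (Fin.ext (by simp [hc]))
    omega
  have claim1 : ∀ i j : Fin (m + 2), P ≤ i → i < j → π j < π i := by
    intro i j h1 h2
    rcases eq_or_lt_of_le h1 with he | hlt
    · subst he
      rw [hPval, Fin.lt_def]
      have := hmax j (by intro hc; subst hc; exact absurd h2 (lt_irrefl _))
      simpa using this
    · by_contra hc
      push_neg at hc
      have hne : π i ≠ π j := fun hh => absurd (π.injective hh) (Fin.ne_of_lt h2)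
      have hij : π i < π j := lt_of_le_of_ne hc hne
      have hjP : π j < π P := by
        rw [hPval, Fin.lt_def]
        have := hmax j (by intro hcc; subst hcc; exact absurd (hlt.trans h2) (lt_irrefl _))
        simpa using this
      exact h312 (my_contains312 π P i j hlt h2 hij hjP)
  have claim2 : ∀ q i : Fin (m + 2), q < P → P ≤ i → π q < π i := by
    intro q i h1 h2
    rcases eq_or_lt_of_le h2 with he | hlt
    · subst he
      rw [hPval, Fin.lt_def]
      have := hmax q (Fin.ne_of_lt h1)
      simpa using this
    · by_contra hc
      push_neg at hc
      have hne : π i ≠ π q := fun hh => absurd (π.injective hh) (Fin.ne_of_gt (h1.trans hlt))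
      have hiq : π i < π q := lt_of_le_of_ne hc hne
      have hqP : π q < π P := by
        rw [hPval, Fin.lt_def]
        have := hmax q (Fin.ne_of_lt h1)
        simpa using this
      exact h231 (my_contains231 π q P i h1 hlt hiq hqP)
  rcases Nat.lt_or_ge (P : ℕ) m with hPm | hPm
  · -- P + 2 ≤ m + 1, so either P = 0 (decreasing) or contradiction with 1432
    rcases Nat.eq_zero_or_pos (P : ℕ) with hP0 | hP0
    · left
      have hdec : ∀ i j : Fin (m + 2), i < j → π j < π i := by
        intro i j hij
        exact claim1 i j (by rw [Fin.le_def, hP0]; omega) hij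
      have hsm : StrictMono ⇑(Fin.revPerm.trans π) := by
        intro i j hij
        have := hdec (Fin.rev j) (Fin.rev i) (by rwa [Fin.rev_lt_rev])
        simpa using this
      have hoi := Subsingleton.elim
        (StrictMono.orderIsoOfSurjective _ hsm (Fin.revPerm.trans π).surjective)
        (OrderIso.refl (Fin (m + 2)))
      have hfix : ∀ x : Fin (m + 2), (Fin.revPerm.trans π) x = x := by
        intro x
        have h1 : (StrictMono.orderIsoOfSurjective _ hsm (Fin.revPerm.trans π).surjective) x
            = (Fin.revPerm.trans π) x := rfl
        rw [hoi] at h1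
        simpa using h1.symm
      ext x
      have := hfix (Fin.rev x)
      simp only [Equiv.trans_apply, Fin.revPerm_apply, Fin.rev_rev] at this
      rw [this]
      simp
    · -- 1 ≤ P and P + 2 ≤ m + 1 : contradiction via 1432
      exfalso
      have hq : (⟨0, by omega⟩ : Fin (m + 2)) < P := by
        rw [Fin.lt_def]; simpa using hP0
      have hi1 : P < (⟨(P : ℕ) + 1, by omega⟩ : Fin (m + 2)) := by
        rw [Fin.lt_def]; simp
      have hi2 : (⟨(P : ℕ) + 1, by omega⟩ : Fin (m + 2)) < ⟨(P : ℕ) + 2, by omega⟩ := by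
        rw [Fin.lt_def]; simp
      have v1 : π ⟨(P : ℕ) + 1, by omega⟩ < π P := claim1 P _ le_rfl hi1
      have v2 : π ⟨(P : ℕ) + 2, by omega⟩ < π ⟨(P : ℕ) + 1, by omega⟩ :=
        claim1 P _ le_rfl (hi1.trans hi2) |> fun _ => claim1 ⟨(P : ℕ) + 1, by omega⟩ _ (le_of_lt hi1) hi2
      have v0 : π ⟨0, by omega⟩ < π ⟨(P : ℕ) + 2, by omega⟩ :=
        claim2 _ _ hq (le_of_lt (hi1.trans hi2))
      exact h1432 (my_contains1432 π ⟨0, by omega⟩ P ⟨(P : ℕ) + 1, by omega⟩ ⟨(P : ℕ) + 2, by omega⟩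
        hq hi1 hi2 v0 v2 v1)
  · rcases Nat.lt_or_ge (P : ℕ) (m + 1) with hPm1 | hPm1
    · -- P = m : shape e2
      right; right
      have hPe : (P : ℕ) = m := by omega
      have hvP : ((π ⟨m, by omega⟩) : ℕ) = m + 1 := by
        have : P = ⟨m, by omega⟩ := Fin.ext (by simpa using hPe)
        rw [← this, hPval]
        simp
      -- show π (last) has value m
      have hm2' : m + 1 < m + 2 := by omega
      have hm1' : m < m + 2 := by omega
      have hlast : ((π ⟨m + 1, hm2'⟩) : ℕ) = m := by
        obtain ⟨x, hxv⟩ : ∃ x : Fin (m + 2), π x = ⟨m, hm1'⟩ := ⟨π⁻¹ ⟨m, hm1'⟩, by simp⟩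
        have hPlt : P < (⟨m + 1, hm2'⟩ : Fin (m + 2)) := by
          rw [Fin.lt_def]
          show (P : ℕ) < m + 1
          omega
        have hxne : (x : ℕ) ≠ m := by
          intro hc
          have hxP : x = P := Fin.ext (by show (x : ℕ) = (P : ℕ); omega)
          rw [hxP, hPval] at hxv
          have := congrArg Fin.val hxv
          simp [Fin.last] at this
        rcases Nat.lt_or_ge (x : ℕ) m with hxm | hxm
        · exfalso
          have hxP : x < P := by rw [Fin.lt_def]; omega
          have c2 := claim2 x ⟨m + 1, hm2'⟩ hxP (le_of_lt hPlt)
          have c1 := claim1 P ⟨m + 1, hm2'⟩ le_rfl hPlt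
          rw [hxv] at c2
          rw [hPval] at c1
          have e2 := Fin.lt_def.mp c2
          have e1 := Fin.lt_def.mp c1
          simp [Fin.last] at e2 e1
          omega
        · have hxm1 : (x : ℕ) = m + 1 := by have := x.isLt; omega
          have hxe : x = ⟨m + 1, hm2'⟩ := Fin.ext (by show (x : ℕ) = m + 1; omega)
          rw [← hxe, hxv]
      exact my_eq_e2 π hvP hlast
    · -- P = m + 1 : shape e1
      right; left
      have hPe : (P : ℕ) = m + 1 := by have := P.isLt; omega
      have hvP : ((π ⟨m + 1, Nat.lt_succ_self (m + 1)⟩) : ℕ) = m + 1 := by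
        have : P = ⟨m + 1, Nat.lt_succ_self (m + 1)⟩ := Fin.ext (by simpa using hPe)
        rw [← this, hPval]
        simp
      exact my_eq_e1 (m := m + 1) π hvP

instance myDecCp {n : ℕ} (π : Equiv.Perm (Fin n)) (p : List ℕ) : Decidable (ContainsPat π p) := by
  unfold ContainsPat; infer_instance

instance myDecAv {n : ℕ} (π : Equiv.Perm (Fin n)) (S : List (List ℕ)) : Decidable (AvoidsAll π S) := by
  unfold AvoidsAll; infer_instance

def avSet (n : ℕ) : Finset (Equiv.Perm (Fin n)) :=
  Finset.univ.filter (fun π => AvoidsAll π myPats)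

lemma dsum_last1 {m : ℕ} (σ : Equiv.Perm (Fin m)) :
    (((dsum σ (1 : Equiv.Perm (Fin 1))) ⟨m, Nat.lt_succ_self m⟩ : Fin (m + 1)) : ℕ) = m := by
  have h : (⟨m, Nat.lt_succ_self m⟩ : Fin (m + 1)) = Fin.natAdd m (0 : Fin 1) := Fin.ext (by simp)
  rw [h, my_dsum_natAdd]
  simp

lemma dsum_last2 {m : ℕ} (σ : Equiv.Perm (Fin m)) :
    (((dsum σ decPerm2) ⟨m + 1, by omega⟩ : Fin (m + 2)) : ℕ) = m := by
  have h : (⟨m + 1, by omega⟩ : Fin (m + 2)) = Fin.natAdd m (1 : Fin 2) := Fin.ext (by simp)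
  rw [h, my_dsum_natAdd]
  simp [decPerm2, Equiv.swap_apply_right]

lemma my_dsum_inj {m k : ℕ} (τ : Equiv.Perm (Fin k)) :
    Function.Injective (fun σ : Equiv.Perm (Fin m) => dsum σ τ) := by
  intro σ σ' h
  ext i
  have := congrArg (fun ρ : Equiv.Perm (Fin (m + k)) => ρ (Fin.castAdd k i)) h
  simp only [my_dsum_castAdd] at this
  have := congrArg Fin.val this
  simp only [Fin.coe_castAdd] at this
  exact this

lemma avSet_succ (m : ℕ) (hm : 1 ≤ m) :
    avSet (m + 2) = (((avSet (m + 1)).image (fun σ => dsum σ (1 : Equiv.Perm (Fin 1)))) ∪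
      ((avSet m).image (fun σ => (dsum σ decPerm2 : Equiv.Perm (Fin (m + 2)))))) ∪ {Fin.revPerm} := by
  ext π
  simp only [avSet, Finset.mem_union, Finset.mem_image, Finset.mem_singleton, Finset.mem_filter,
    Finset.mem_univ, true_and]
  constructor
  · intro hπ
    rcases my_decomp hm π hπ with hrev | ⟨σ, hσ⟩ | ⟨σ, hσ⟩
    · right; exact hrev
    · left; left
      refine ⟨σ, ?_, hσ.symm⟩
      intro p hp hc
      exact hπ p hp (by rw [hσ]; exact my_containsPat_dsum_left σ (1 : Equiv.Perm (Fin 1)) p hc)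
    · left; right
      refine ⟨σ, ?_, hσ.symm⟩
      intro p hp hc
      exact hπ p hp (by rw [hσ]; exact my_containsPat_dsum_left σ decPerm2 p hc)
  · rintro ((⟨σ, hσ, rfl⟩ | ⟨σ, hσ, rfl⟩) | rfl)
    · exact my_avoid_dsum σ _ (by decide) (by omega) hσ
    · exact my_avoid_dsum σ _ (by decide) (by omega) hσ
    · exact my_rev_avoids

lemma card_avSet_succ (m : ℕ) (hm : 1 ≤ m) :
    (avSet (m + 2)).card = (avSet (m + 1)).card + (avSet m).card + 1 := by
  have hpos : m + 1 < m + 2 := by omega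
  have e1v : ∀ σ : Equiv.Perm (Fin (m + 1)),
      ((dsum σ (1 : Equiv.Perm (Fin 1)) ((⟨m + 1, hpos⟩ : Fin (m + 2)))) : ℕ) = m + 1 := by
    intro σ
    have h : (⟨m + 1, hpos⟩ : Fin (m + 2)) = Fin.natAdd (m + 1) (0 : Fin 1) := Fin.ext (by simp)
    rw [h, my_dsum_natAdd]
    simp
  have e2v : ∀ σ : Equiv.Perm (Fin m),
      ((dsum σ decPerm2 ((⟨m + 1, hpos⟩ : Fin (m + 2)))) : ℕ) = m := by
    intro σ
    have h : (⟨m + 1, hpos⟩ : Fin (m + 2)) = Fin.natAdd m (1 : Fin 2) := Fin.ext (by simp)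
    rw [h, my_dsum_natAdd]
    simp [decPerm2, Equiv.swap_apply_right]
  have revv : (((Fin.revPerm : Equiv.Perm (Fin (m + 2)))) ⟨m + 1, hpos⟩ : ℕ) = 0 := by
    simp [Fin.rev]
  rw [avSet_succ m hm]
  have hd1 : Disjoint ((avSet (m + 1)).image (fun σ => dsum σ (1 : Equiv.Perm (Fin 1))))
      ((avSet m).image (fun σ => (dsum σ decPerm2 : Equiv.Perm (Fin (m + 2))))) := by
    rw [Finset.disjoint_left]
    rintro π h1 h2
    simp only [Finset.mem_image] at h1 h2
    obtain ⟨σ, _, rfl⟩ := h1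
    obtain ⟨σ', _, he⟩ := h2
    have v1 := e1v σ
    have v2 := e2v σ'
    rw [he] at v2
    omega
  have hd2 : Disjoint (((avSet (m + 1)).image (fun σ => dsum σ (1 : Equiv.Perm (Fin 1)))) ∪
      ((avSet m).image (fun σ => (dsum σ decPerm2 : Equiv.Perm (Fin (m + 2))))))
      ({Fin.revPerm} : Finset (Equiv.Perm (Fin (m + 2)))) := by
    rw [Finset.disjoint_right]
    rintro π hπ h1
    simp only [Finset.mem_singleton] at hπ
    subst hπ
    simp only [Finset.mem_union, Finset.mem_image] at h1
    rcases h1 with ⟨σ, _, he⟩ | ⟨σ, _, he⟩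
    · have v1 := e1v σ
      rw [he] at v1
      omega
    · have v2 := e2v σ
      rw [he] at v2
      omega
  rw [Finset.card_union_of_disjoint hd2, Finset.card_union_of_disjoint hd1,
    Finset.card_singleton, Finset.card_image_of_injective _ (my_dsum_inj _),
    Finset.card_image_of_injective _ (my_dsum_inj _)]

lemma card_avSet : ∀ n : ℕ, 1 ≤ n → (avSet n).card + 1 = fib' (n + 1) := by
  intro n
  induction n using Nat.strong_induction_on with
  | _ n ih =>
    intro hn
    match n, hn with
    | 1, _ => decide
    | 2, _ => decide
    | (m + 3), _ =>
      have h1 := ih (m + 2) (by omega) (by omega)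
      have h2 := ih (m + 1) (by omega) (by omega)
      have h3 := card_avSet_succ (m + 1) (by omega)
      rw [show m + 1 + 2 = m + 3 from by omega, show m + 1 + 1 = m + 2 from by omega] at h3
      have h4 : fib' (m + 3 + 1) = fib' (m + 3) + fib' (m + 2) := rfl
      rw [show m + 2 + 1 = m + 3 from by omega] at h1
      rw [show m + 1 + 1 = m + 2 from by omega] at h2
      omega

theorem stmt2 (n : ℕ) (hn : 1 ≤ n) :
    {π : Equiv.Perm (Fin n) | AvoidsAll π [[2,3,1],[3,1,2],[1,4,3,2]]}.ncard = fib' (n + 1) - 1 := by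
  have hset : {π : Equiv.Perm (Fin n) | AvoidsAll π [[2,3,1],[3,1,2],[1,4,3,2]]} = ↑(avSet n) := by
    ext π
    simp [avSet, myPats]
  rw [hset, Set.ncard_coe_finset]
  have := card_avSet n hn
  omega
end

section
/- For all n ≥ 1, the number of permutations of length n avoiding all of the patterns 312, 321, and 1342 equals F_{n+1} - 1, where F is the Fibonacci sequence with F_0 = F_1 = 1. -/
open Finset MvPolynomial
open scoped Classical

section helpers
variable {n : ℕ} {π : Equiv.Perm (Fin n)} {a b c d : Fin n}

lemma contains312 (hab : a < b) (hbc : b < c)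
    (h1 : π b < π c) (h2 : π c < π a) : ContainsPat π [3,1,2] := by
  have hab' : (a:ℕ) < b := hab
  have hbc' : (b:ℕ) < c := hbc
  have h1' : (π b:ℕ) < π c := h1
  have h2' : (π c:ℕ) < π a := h2
  have hget : ∀ i : Fin ([3,1,2].length),
      [3,1,2].get i = if (i:ℕ) = 0 then 3 else if (i:ℕ) = 1 then 1 else 2 := by decide
  refine ⟨fun i => if (i:ℕ) = 0 then a else if (i:ℕ) = 1 then b else c, ?_, ?_⟩
  · intro i j hij
    have hij' : (i:ℕ) < (j:ℕ) := hij
    have hi : (i:ℕ) < 3 := i.isLt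
    have hj : (j:ℕ) < 3 := j.isLt
    simp only [Fin.lt_def]
    split_ifs <;> omega
  · intro i j
    have hi : (i:ℕ) < 3 := i.isLt
    have hj : (j:ℕ) < 3 := j.isLt
    rw [hget i, hget j]
    simp only [Fin.lt_def]
    split_ifs <;> omega

lemma contains321 (hab : a < b) (hbc : b < c)
    (h1 : π b < π a) (h2 : π c < π b) : ContainsPat π [3,2,1] := by
  have hab' : (a:ℕ) < b := hab
  have hbc' : (b:ℕ) < c := hbc
  have h1' : (π b:ℕ) < π a := h1
  have h2' : (π c:ℕ) < π b := h2
  have hget : ∀ i : Fin ([3,2,1].length),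
      [3,2,1].get i = if (i:ℕ) = 0 then 3 else if (i:ℕ) = 1 then 2 else 1 := by decide
  refine ⟨fun i => if (i:ℕ) = 0 then a else if (i:ℕ) = 1 then b else c, ?_, ?_⟩
  · intro i j hij
    have hij' : (i:ℕ) < (j:ℕ) := hij
    have hi : (i:ℕ) < 3 := i.isLt
    have hj : (j:ℕ) < 3 := j.isLt
    simp only [Fin.lt_def]
    split_ifs <;> omega
  · intro i j
    have hi : (i:ℕ) < 3 := i.isLt
    have hj : (j:ℕ) < 3 := j.isLt
    rw [hget i, hget j]
    simp only [Fin.lt_def]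
    split_ifs <;> omega

lemma contains1342 (hab : a < b) (hbc : b < c) (hcd : c < d)
    (h1 : π a < π d) (h2 : π d < π b) (h3 : π b < π c) : ContainsPat π [1,3,4,2] := by
  have hab' : (a:ℕ) < b := hab
  have hbc' : (b:ℕ) < c := hbc
  have hcd' : (c:ℕ) < d := hcd
  have h1' : (π a:ℕ) < π d := h1
  have h2' : (π d:ℕ) < π b := h2
  have h3' : (π b:ℕ) < π c := h3
  have hget : ∀ i : Fin ([1,3,4,2].length),
      [1,3,4,2].get i = if (i:ℕ) = 0 then 1 else if (i:ℕ) = 1 then 3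
        else if (i:ℕ) = 2 then 4 else 2 := by decide
  refine ⟨fun i => if (i:ℕ) = 0 then a else if (i:ℕ) = 1 then b
    else if (i:ℕ) = 2 then c else d, ?_, ?_⟩
  · intro i j hij
    have hij' : (i:ℕ) < (j:ℕ) := hij
    have hi : (i:ℕ) < 4 := i.isLt
    have hj : (j:ℕ) < 4 := j.isLt
    simp only [Fin.lt_def]
    split_ifs <;> omega
  · intro i j
    have hi : (i:ℕ) < 4 := i.isLt
    have hj : (j:ℕ) < 4 := j.isLt
    rw [hget i, hget j]
    simp only [Fin.lt_def]
    split_ifs <;> omega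

end helpers

def Qpred {n : ℕ} (π : Equiv.Perm (Fin n)) : Prop :=
  ∃ m : Fin n, (π m : ℕ) = 0 ∧ (∀ i : Fin n, (i:ℕ) < (m:ℕ) → (π i : ℕ) = (i:ℕ) + 1) ∧
    (∀ i : Fin n, (m:ℕ) < (i:ℕ) → (i:ℕ) ≤ (π i : ℕ) + 1 ∧ (π i : ℕ) ≤ (i:ℕ) + 1)

lemma posD {n : ℕ} (π : Equiv.Perm (Fin n)) {m : Fin n} (hm0 : (π m : ℕ) = 0)
    (hlt : ∀ i : Fin n, (i:ℕ) < (m:ℕ) → (π i : ℕ) = (i:ℕ) + 1) :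
    ∀ j : Fin n, (m:ℕ) < (j:ℕ) → (m:ℕ) < (π j : ℕ) := by
  intro j hj
  by_contra hle
  push_neg at hle
  have h0 : (π j : ℕ) ≠ 0 := by
    intro h
    have hjm : j = m := π.injective (Fin.ext (by omega))
    have := congrArg Fin.val hjm
    omega
  have hbd : (π j : ℕ) - 1 < n := by
    have := m.isLt
    omega
  set i : Fin n := ⟨(π j : ℕ) - 1, hbd⟩ with hidef
  have hiv : (i:ℕ) = (π j : ℕ) - 1 := rfl
  have hilt : (i:ℕ) < (m:ℕ) := by omega
  have hval : (π i : ℕ) = (π j : ℕ) := by rw [hlt i hilt]; omega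
  have : i = j := π.injective (Fin.ext hval)
  have := congrArg Fin.val this
  omega

lemma avoids_imp_Q {n : ℕ} (π : Equiv.Perm (Fin n)) (hn : 1 ≤ n)
    (h312 : ¬ ContainsPat π [3,1,2]) (h321 : ¬ ContainsPat π [3,2,1])
    (h1342 : ¬ ContainsPat π [1,3,4,2]) : Qpred π := by
  set m : Fin n := π.symm ⟨0, hn⟩ with hmdef
  have hm0 : (π m : ℕ) = 0 := by rw [hmdef, π.apply_symm_apply]
  -- Step A
  have stepA : ∀ i j : Fin n, (i:ℕ) < (j:ℕ) → (j:ℕ) < (m:ℕ) → (π i:ℕ) < (π j:ℕ) := by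
    intro i j hij hjm
    by_contra hle
    push_neg at hle
    have hne : (π i : ℕ) ≠ (π j : ℕ) := fun h => by
      have := congrArg Fin.val (π.injective (Fin.ext h)); omega
    have hj0 : (π j : ℕ) ≠ 0 := fun h => by
      have := congrArg Fin.val (π.injective (Fin.ext (h.trans hm0.symm))); omega
    exact h321 (contains321 (a := i) (b := j) (c := m)
      (show (i:ℕ) < (j:ℕ) from hij) (show (j:ℕ) < (m:ℕ) from hjm)
      (show (π j:ℕ) < (π i:ℕ) by omega) (show (π m:ℕ) < (π j:ℕ) by omega))
  -- Step B
  have stepB : ∀ i j : Fin n, (i:ℕ) < (m:ℕ) → (m:ℕ) < (j:ℕ) → (π i:ℕ) < (π j:ℕ) := by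
    intro i j him hmj
    by_contra hle
    push_neg at hle
    have hne : (π i : ℕ) ≠ (π j : ℕ) := fun h => by
      have := congrArg Fin.val (π.injective (Fin.ext h)); omega
    have hj0 : (π j : ℕ) ≠ 0 := fun h => by
      have := congrArg Fin.val (π.injective (Fin.ext (h.trans hm0.symm))); omega
    exact h312 (contains312 (a := i) (b := m) (c := j)
      (show (i:ℕ) < (m:ℕ) from him) (show (m:ℕ) < (j:ℕ) from hmj)
      (show (π m:ℕ) < (π j:ℕ) by omega) (show (π j:ℕ) < (π i:ℕ) by omega))
  -- Step C
  have stepC : ∀ i : Fin n, (i:ℕ) < (m:ℕ) → (π i : ℕ) = (i:ℕ) + 1 := by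
    intro i hi
    have hine : (π i : ℕ) ≠ 0 := fun h => by
      have := congrArg Fin.val (π.injective (Fin.ext (h.trans hm0.symm))); omega
    have key : Finset.Iio (π i) = Finset.image π (insert m (Finset.Iio i)) := by
      ext v
      simp only [Finset.mem_Iio, Finset.mem_image, Finset.mem_insert]
      constructor
      · intro hv
        have hv' : (v:ℕ) < (π i:ℕ) := hv
        refine ⟨π.symm v, ?_, π.apply_symm_apply v⟩
        have hjv : (π (π.symm v) : ℕ) = (v:ℕ) := by rw [π.apply_symm_apply]
        set j := π.symm v with hjdef
        rcases Nat.lt_trichotomy (j:ℕ) (i:ℕ) with h | h | h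
        · exact Or.inr h
        · exfalso; have : j = i := Fin.ext h
          rw [this] at hjv; omega
        · rcases Nat.lt_trichotomy (j:ℕ) (m:ℕ) with h2 | h2 | h2
          · exfalso; have := stepA i j h h2; omega
          · exact Or.inl (Fin.ext h2)
          · exfalso; have := stepB i j hi h2; omega
      · rintro ⟨j, hj | hj, rfl⟩
        · subst hj
          show (π m : ℕ) < (π i : ℕ)
          omega
        · have hj' : (j:ℕ) < (i:ℕ) := hj
          show (π j : ℕ) < (π i : ℕ)
          exact stepA j i hj' hi
    have hnm : m ∉ Finset.Iio i := by
      simp only [Finset.mem_Iio]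
      intro h
      have : (m:ℕ) < (i:ℕ) := h
      omega
    have hcard := congrArg Finset.card key
    rw [Fin.card_Iio, Finset.card_image_of_injective _ π.injective,
      Finset.card_insert_of_notMem hnm, Fin.card_Iio] at hcard
    omega
  have stepD := posD π hm0 stepC
  -- Step E
  have stepE : ∀ i : Fin n, (π i : ℕ) ≤ (i:ℕ) + 1 := by
    intro i
    by_contra hgt
    push_neg at hgt
    set T := Finset.univ.filter (fun j : Fin n => (i:ℕ) < (j:ℕ) ∧ (π j:ℕ) < (π i:ℕ)) with hT
    have hsub : Finset.Iio (π i) ⊆ Finset.image π (Finset.Iio i ∪ T) := by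
      intro v hv
      have hv0 : v < π i := Finset.mem_Iio.mp hv
      have hv' : (v:ℕ) < (π i:ℕ) := hv0
      refine Finset.mem_image.mpr ⟨π.symm v, ?_, π.apply_symm_apply v⟩
      have hjv : (π (π.symm v):ℕ) = (v:ℕ) := by rw [π.apply_symm_apply]
      set j := π.symm v with hjdef
      rcases Nat.lt_trichotomy (j:ℕ) (i:ℕ) with h | h | h
      · exact Finset.mem_union_left _ (Finset.mem_Iio.mpr h)
      · exfalso; have : j = i := Fin.ext h; rw [this] at hjv; omega
      · exact Finset.mem_union_right _ (Finset.mem_filter.mpr ⟨Finset.mem_univ _, h, by omega⟩)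
    have hc : (π i:ℕ) ≤ (i:ℕ) + T.card := by
      calc (π i:ℕ) = (Finset.Iio (π i)).card := (Fin.card_Iio _).symm
      _ ≤ (Finset.image π (Finset.Iio i ∪ T)).card := Finset.card_le_card hsub
      _ ≤ (Finset.Iio i ∪ T).card := Finset.card_image_le
      _ ≤ (Finset.Iio i).card + T.card := Finset.card_union_le _ _
      _ = (i:ℕ) + T.card := by rw [Fin.card_Iio]
    have h2 : 1 < T.card := by omega
    obtain ⟨j1, hj1, j2, hj2, hne⟩ := Finset.one_lt_card.mp h2
    simp only [hT, Finset.mem_filter, Finset.mem_univ, true_and] at hj1 hj2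
    have hvne : (π j1 : ℕ) ≠ (π j2 : ℕ) := fun h => by
      exact hne (π.injective (Fin.ext h))
    rcases Nat.lt_trichotomy (j1:ℕ) (j2:ℕ) with h | h | h
    · rcases Nat.lt_trichotomy (π j1:ℕ) (π j2:ℕ) with h3 | h3 | h3
      · exact h312 (contains312 (a:=i) (b:=j1) (c:=j2)
          (show (i:ℕ) < _ from hj1.1) (show (j1:ℕ) < _ from h)
          (show (π j1:ℕ) < _ from h3) (show (π j2:ℕ) < _ from hj2.2))
      · exact hvne h3
      · exact h321 (contains321 (a:=i) (b:=j1) (c:=j2)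
          (show (i:ℕ) < _ from hj1.1) (show (j1:ℕ) < _ from h)
          (show (π j1:ℕ) < _ from hj1.2) (show (π j2:ℕ) < _ from h3))
    · exact hne (Fin.ext h)
    · rcases Nat.lt_trichotomy (π j2:ℕ) (π j1:ℕ) with h3 | h3 | h3
      · exact h312 (contains312 (a:=i) (b:=j2) (c:=j1)
          (show (i:ℕ) < _ from hj2.1) (show (j2:ℕ) < _ from h)
          (show (π j2:ℕ) < _ from h3) (show (π j1:ℕ) < _ from hj1.2))
      · exact hvne h3.symm
      · exact h321 (contains321 (a:=i) (b:=j2) (c:=j1)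
          (show (i:ℕ) < _ from hj2.1) (show (j2:ℕ) < _ from h)
          (show (π j2:ℕ) < _ from hj2.2) (show (π j1:ℕ) < _ from h3))
  -- Step F
  have stepF : ∀ i : Fin n, (m:ℕ) < (i:ℕ) → (i:ℕ) ≤ (π i:ℕ) + 1 := by
    intro i hi
    by_contra hgt
    push_neg at hgt
    set T := Finset.univ.filter (fun j : Fin n => (j:ℕ) < (i:ℕ) ∧ (π i:ℕ) < (π j:ℕ)) with hT
    have hsub : Finset.Iio i ⊆ Finset.image π.symm (Finset.Iio (π i)) ∪ T := by
      intro j hj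
      have hj0 : j < i := Finset.mem_Iio.mp hj
      have hj' : (j:ℕ) < (i:ℕ) := hj0
      rcases Nat.lt_trichotomy (π j:ℕ) (π i:ℕ) with h1 | h1 | h1
      · refine Finset.mem_union_left _ (Finset.mem_image.mpr ⟨π j, Finset.mem_Iio.mpr h1, π.symm_apply_apply j⟩)
      · exfalso
        have := congrArg Fin.val (π.injective (Fin.ext h1)); omega
      · exact Finset.mem_union_right _ (Finset.mem_filter.mpr ⟨Finset.mem_univ _, hj', h1⟩)
    have hc : (i:ℕ) ≤ (π i:ℕ) + T.card := by
      calc (i:ℕ) = (Finset.Iio i).card := (Fin.card_Iio _).symm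
      _ ≤ (Finset.image π.symm (Finset.Iio (π i)) ∪ T).card := Finset.card_le_card hsub
      _ ≤ (Finset.image π.symm (Finset.Iio (π i))).card + T.card := Finset.card_union_le _ _
      _ ≤ (Finset.Iio (π i)).card + T.card := Nat.add_le_add_right Finset.card_image_le _
      _ = (π i:ℕ) + T.card := by rw [Fin.card_Iio]
    have h2 : 1 < T.card := by omega
    obtain ⟨j1, hj1, j2, hj2, hne⟩ := Finset.one_lt_card.mp h2
    simp only [hT, Finset.mem_filter, Finset.mem_univ, true_and] at hj1 hj2
    have hvne : (π j1 : ℕ) ≠ (π j2 : ℕ) := fun h => hne (π.injective (Fin.ext h))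
    have hpim : (m:ℕ) < (π i:ℕ) := stepD i hi
    have hmj : ∀ j : Fin n, (π i:ℕ) < (π j:ℕ) → (m:ℕ) < (j:ℕ) := by
      intro j hjv
      rcases Nat.lt_trichotomy (j:ℕ) (m:ℕ) with h | h | h
      · have := stepC j h; omega
      · exfalso; have : j = m := Fin.ext h; rw [this] at hjv; omega
      · exact h
    have him0 : (π m : ℕ) < (π i : ℕ) := by omega
    rcases Nat.lt_trichotomy (j1:ℕ) (j2:ℕ) with h | h | h
    · rcases Nat.lt_trichotomy (π j1:ℕ) (π j2:ℕ) with h3 | h3 | h3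
      · exact h1342 (contains1342 (a:=m) (b:=j1) (c:=j2) (d:=i)
          (show (m:ℕ) < _ from hmj j1 hj1.2) (show (j1:ℕ) < _ from h)
          (show (j2:ℕ) < _ from hj2.1)
          (show (π m:ℕ) < _ from him0) (show (π i:ℕ) < _ from hj1.2)
          (show (π j1:ℕ) < _ from h3))
      · exact hvne h3
      · exact h321 (contains321 (a:=j1) (b:=j2) (c:=i)
          (show (j1:ℕ) < _ from h) (show (j2:ℕ) < _ from hj2.1)
          (show (π j2:ℕ) < _ from h3) (show (π i:ℕ) < _ from hj2.2))
    · exact hne (Fin.ext h)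
    · rcases Nat.lt_trichotomy (π j2:ℕ) (π j1:ℕ) with h3 | h3 | h3
      · exact h1342 (contains1342 (a:=m) (b:=j2) (c:=j1) (d:=i)
          (show (m:ℕ) < _ from hmj j2 hj2.2) (show (j2:ℕ) < _ from h)
          (show (j1:ℕ) < _ from hj1.1)
          (show (π m:ℕ) < _ from him0) (show (π i:ℕ) < _ from hj2.2)
          (show (π j2:ℕ) < _ from h3))
      · exact hvne h3.symm
      · exact h321 (contains321 (a:=j2) (b:=j1) (c:=i)
          (show (j2:ℕ) < _ from h) (show (j1:ℕ) < _ from hj1.1)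
          (show (π j1:ℕ) < _ from h3) (show (π i:ℕ) < _ from hj1.2))
  exact ⟨m, hm0, stepC, fun i hi => ⟨stepF i hi, stepE i⟩⟩

lemma Q_imp_avoids {n : ℕ} (π : Equiv.Perm (Fin n)) (hQ : Qpred π) :
    AvoidsAll π [[3,1,2],[3,2,1],[1,3,4,2]] := by
  obtain ⟨m, hm0, hlt, hgt⟩ := hQ
  have stepD := posD π hm0 hlt
  have inv : ∀ i j : Fin n, (i:ℕ) < (j:ℕ) → (π j:ℕ) < (π i:ℕ) →
      (j:ℕ) = (m:ℕ) ∨ (j:ℕ) = (i:ℕ) + 1 := by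
    intro i j hij hval
    rcases Nat.lt_trichotomy (j:ℕ) (m:ℕ) with h | h | h
    · exfalso
      have h1 := hlt i (by omega)
      have h2 := hlt j h
      omega
    · exact Or.inl h
    · rcases Nat.lt_trichotomy (i:ℕ) (m:ℕ) with h2 | h2 | h2
      · exfalso
        have h1 := hlt i h2
        have h3 := stepD j h
        omega
      · exfalso
        have : i = m := Fin.ext h2
        rw [this] at hval
        omega
      · have g1 := hgt i h2
        have g2 := hgt j h
        right; omega
  intro p hp
  simp only [List.mem_cons, List.not_mem_nil, or_false] at hp
  rcases hp with rfl | rfl | rfl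
  · -- [3,1,2]
    rintro ⟨f, mono, iso⟩
    have hab : f ⟨0, by decide⟩ < f ⟨1, by decide⟩ := mono (by decide)
    have hbc : f ⟨1, by decide⟩ < f ⟨2, by decide⟩ := mono (by decide)
    have h12 : π (f ⟨1, by decide⟩) < π (f ⟨2, by decide⟩) :=
      (iso ⟨1, by decide⟩ ⟨2, by decide⟩).mp (by decide)
    have h20 : π (f ⟨2, by decide⟩) < π (f ⟨0, by decide⟩) :=
      (iso ⟨2, by decide⟩ ⟨0, by decide⟩).mp (by decide)
    have hab' : (f ⟨0, by decide⟩ : ℕ) < (f ⟨1, by decide⟩ : ℕ) := hab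
    have hbc' : (f ⟨1, by decide⟩ : ℕ) < (f ⟨2, by decide⟩ : ℕ) := hbc
    have h12' : (π (f ⟨1, by decide⟩) : ℕ) < (π (f ⟨2, by decide⟩) : ℕ) := h12
    have h20' : (π (f ⟨2, by decide⟩) : ℕ) < (π (f ⟨0, by decide⟩) : ℕ) := h20
    rcases inv (f ⟨0, by decide⟩) (f ⟨2, by decide⟩) (by omega) (by omega) with h | h
    · have : f ⟨2, by decide⟩ = m := Fin.ext h
      rw [this] at h12'
      omega
    · omega
  · -- [3,2,1]
    rintro ⟨f, mono, iso⟩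
    have hab' : (f ⟨0, by decide⟩ : ℕ) < (f ⟨1, by decide⟩ : ℕ) := mono (by decide)
    have hbc' : (f ⟨1, by decide⟩ : ℕ) < (f ⟨2, by decide⟩ : ℕ) := mono (by decide)
    have h10' : (π (f ⟨1, by decide⟩) : ℕ) < (π (f ⟨0, by decide⟩) : ℕ) :=
      (iso ⟨1, by decide⟩ ⟨0, by decide⟩).mp (by decide)
    have h21' : (π (f ⟨2, by decide⟩) : ℕ) < (π (f ⟨1, by decide⟩) : ℕ) :=
      (iso ⟨2, by decide⟩ ⟨1, by decide⟩).mp (by decide)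
    rcases inv (f ⟨0, by decide⟩) (f ⟨1, by decide⟩) (by omega) (by omega) with h1 | h1
    · -- f1 = m : π (f 1) = 0, but π (f 2) < π (f 1)
      have : f ⟨1, by decide⟩ = m := Fin.ext h1
      rw [this] at h21'
      omega
    · rcases inv (f ⟨0, by decide⟩) (f ⟨2, by decide⟩) (by omega) (by omega) with h2 | h2
      · -- f2 = m : then f0 < f1 < m, increasing by hlt
        have : f ⟨2, by decide⟩ = m := Fin.ext h2
        have e0 := hlt (f ⟨0, by decide⟩) (by omega)
        have e1 := hlt (f ⟨1, by decide⟩) (by omega)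
        omega
      · omega
  · -- [1,3,4,2]
    rintro ⟨f, mono, iso⟩
    have hab' : (f ⟨0, by decide⟩ : ℕ) < (f ⟨1, by decide⟩ : ℕ) := mono (by decide)
    have hbc' : (f ⟨1, by decide⟩ : ℕ) < (f ⟨2, by decide⟩ : ℕ) := mono (by decide)
    have hcd' : (f ⟨2, by decide⟩ : ℕ) < (f ⟨3, by decide⟩ : ℕ) := mono (by decide)
    have h03' : (π (f ⟨0, by decide⟩) : ℕ) < (π (f ⟨3, by decide⟩) : ℕ) :=
      (iso ⟨0, by decide⟩ ⟨3, by decide⟩).mp (by decide)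
    have h31' : (π (f ⟨3, by decide⟩) : ℕ) < (π (f ⟨1, by decide⟩) : ℕ) :=
      (iso ⟨3, by decide⟩ ⟨1, by decide⟩).mp (by decide)
    have h12' : (π (f ⟨1, by decide⟩) : ℕ) < (π (f ⟨2, by decide⟩) : ℕ) :=
      (iso ⟨1, by decide⟩ ⟨2, by decide⟩).mp (by decide)
    rcases inv (f ⟨2, by decide⟩) (f ⟨3, by decide⟩) (by omega) (by omega) with h | h
    · have : f ⟨3, by decide⟩ = m := Fin.ext h
      rw [this] at h03'
      omega
    · rcases inv (f ⟨1, by decide⟩) (f ⟨3, by decide⟩) (by omega) (by omega) with h2 | h2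
      · have : f ⟨3, by decide⟩ = m := Fin.ext h2
        rw [this] at h03'
        omega
      · omega

def Bpred {n : ℕ} (π : Equiv.Perm (Fin n)) : Prop :=
  ∀ i : Fin n, (π i : ℕ) ≤ (i:ℕ) + 1 ∧ (i:ℕ) ≤ (π i : ℕ) + 1

noncomputable def Bset (n : ℕ) : Finset (Equiv.Perm (Fin n)) := univ.filter Bpred
noncomputable def Aset (n : ℕ) : Finset (Equiv.Perm (Fin n)) := univ.filter Qpred

section evals
variable {n : ℕ}

lemma dec0_zero (σ : Equiv.Perm (Fin n)) :
    ((Equiv.Perm.decomposeFin.symm (0, σ)) 0 : ℕ) = 0 := by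
  rw [Equiv.Perm.decomposeFin_symm_apply_zero]; rfl

lemma dec0_succ (σ : Equiv.Perm (Fin n)) (x : Fin n) :
    ((Equiv.Perm.decomposeFin.symm (0, σ)) x.succ : ℕ) = (σ x : ℕ) + 1 := by
  rw [Equiv.Perm.decomposeFin_symm_apply_succ, Equiv.swap_self]
  rfl

lemma dec1_zero (σ : Equiv.Perm (Fin (n+1))) :
    ((Equiv.Perm.decomposeFin.symm (1, σ)) 0 : ℕ) = 1 := by
  rw [Equiv.Perm.decomposeFin_symm_apply_zero]
  simp [Fin.val_one]

lemma dec1_succ (σ : Equiv.Perm (Fin (n+1))) (x : Fin (n+1)) :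
    ((Equiv.Perm.decomposeFin.symm (1, σ)) x.succ : ℕ)
      = if (σ x : ℕ) = 0 then 0 else (σ x : ℕ) + 1 := by
  rw [Equiv.Perm.decomposeFin_symm_apply_succ]
  by_cases h : (σ x : ℕ) = 0
  · have h' : σ x = 0 := Fin.ext (by simpa using h)
    rw [if_pos h, h', Fin.succ_zero_eq_one, Equiv.swap_apply_right]
    rfl
  · rw [if_neg h, Equiv.swap_apply_of_ne_of_ne (Fin.succ_ne_zero _) ?_, Fin.val_succ]
    intro hc
    exact h (by
      have := Fin.succ_injective _ (hc.trans Fin.succ_zero_eq_one.symm)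
      simp [this])

lemma dec_surj (π : Equiv.Perm (Fin (n+1))) :
    ∃ x : Fin (n+1) × Equiv.Perm (Fin n), Equiv.Perm.decomposeFin.symm x = π :=
  ⟨Equiv.Perm.decomposeFin π, Equiv.symm_apply_apply _ _⟩

end evals

section bij
variable {n : ℕ}

lemma dec_inj (p : Fin (n+1)) :
    Function.Injective (fun σ : Equiv.Perm (Fin n) => Equiv.Perm.decomposeFin.symm (p, σ)) := by
  intro a b h
  have := Equiv.Perm.decomposeFin.symm.injective h
  simpa using this

lemma Bpred_dec0 (σ : Equiv.Perm (Fin n)) :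
    Bpred (Equiv.Perm.decomposeFin.symm (0, σ)) ↔ Bpred σ := by
  constructor
  · intro h x
    have := h x.succ
    rw [dec0_succ, Fin.val_succ] at this
    omega
  · intro h i
    refine Fin.cases ?_ ?_ i
    · rw [dec0_zero]
      have hz : ((0 : Fin (n+1)) : ℕ) = 0 := rfl
      omega
    · intro x
      have := h x
      rw [dec0_succ, Fin.val_succ]
      omega

lemma card_B_zero : ((Bset (n+1)).filter (fun π => (π 0 : ℕ) = 0)).card = (Bset n).card := by
  have himg : (Bset (n+1)).filter (fun π => (π 0 : ℕ) = 0)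
      = (Bset n).image (fun σ => Equiv.Perm.decomposeFin.symm (0, σ)) := by
    ext π
    simp only [Bset, mem_filter, mem_image, mem_univ, true_and]
    constructor
    · rintro ⟨hB, h0⟩
      obtain ⟨⟨p, σ⟩, rfl⟩ := dec_surj π
      have hp : (p : ℕ) = 0 := by
        rwa [Equiv.Perm.decomposeFin_symm_apply_zero] at h0
      have hp' : p = 0 := Fin.ext (by simpa using hp)
      subst hp'
      exact ⟨σ, (Bpred_dec0 σ).mp hB, rfl⟩
    · rintro ⟨σ, hσ, rfl⟩
      exact ⟨(Bpred_dec0 σ).mpr hσ, dec0_zero σ⟩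
  rw [himg, card_image_of_injective _ (dec_inj 0)]

lemma card_B_one : ((Bset (n+2)).filter (fun π => (π 0 : ℕ) = 1)).card
    = ((Bset (n+1)).filter (fun σ => (σ 0 : ℕ) = 0)).card := by
  have himg : (Bset (n+2)).filter (fun π => (π 0 : ℕ) = 1)
      = ((Bset (n+1)).filter (fun σ => (σ 0 : ℕ) = 0)).image
          (fun σ => Equiv.Perm.decomposeFin.symm (1, σ)) := by
    ext π
    simp only [Bset, mem_filter, mem_image, mem_univ, true_and]
    constructor
    · rintro ⟨hB, h0⟩
      obtain ⟨⟨p, σ⟩, rfl⟩ := dec_surj π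
      have hp : (p : ℕ) = 1 := by
        rwa [Equiv.Perm.decomposeFin_symm_apply_zero] at h0
      have hp' : p = 1 := Fin.ext (by simpa using hp)
      subst hp'
      -- find position of value 0 : it is 1
      set π := Equiv.Perm.decomposeFin.symm ((1 : Fin (n+2)), σ) with hπ
      have hs0 : (σ 0 : ℕ) = 0 := by
        have h1v : (π ((0 : Fin (n+1)).succ) : ℕ) = if (σ 0 : ℕ) = 0 then 0 else (σ 0 : ℕ) + 1 :=
          dec1_succ σ 0
        -- value 0 is at position π.symm 0
        have hzpos : (π.symm 0 : ℕ) ≤ 1 := by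
          have := (hB (π.symm 0)).2
          rwa [Equiv.apply_symm_apply] at this
        have hne : (π.symm 0 : ℕ) ≠ 0 := by
          intro h
          have : π.symm 0 = 0 := Fin.ext h
          have := congrArg π this
          rw [Equiv.apply_symm_apply] at this
          rw [← this] at h0
          simp at h0
        have h1 : π.symm 0 = (0 : Fin (n+1)).succ := by
          apply Fin.ext
          rw [Fin.val_succ]
          simp only [Fin.val_zero]
          omega
        have : (π ((0 : Fin (n+1)).succ) : ℕ) = 0 := by
          rw [← h1, Equiv.apply_symm_apply]; rfl
        rw [h1v] at this
        by_contra hc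
        rw [if_neg hc] at this
        omega
      refine ⟨σ, ⟨?_, hs0⟩, rfl⟩
      intro x
      by_cases hx : x = 0
      · subst hx
        have hz : ((0 : Fin (n+1)) : ℕ) = 0 := rfl
        omega
      · have hσx : (σ x : ℕ) ≠ 0 := by
          intro h
          exact hx (σ.injective (Fin.ext (by rw [h, hs0])))
        have := hB x.succ
        rw [hπ, dec1_succ, if_neg hσx, Fin.val_succ] at this
        omega
    · rintro ⟨σ, ⟨hσ, hσ0⟩, rfl⟩
      refine ⟨?_, dec1_zero σ⟩
      intro i
      refine Fin.cases ?_ ?_ i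
      · rw [dec1_zero]
        have hz : ((0 : Fin (n+2)) : ℕ) = 0 := rfl
        omega
      · intro x
        rw [dec1_succ, Fin.val_succ]
        by_cases h : (σ x : ℕ) = 0
        · rw [if_pos h]
          have : x = 0 := σ.injective (Fin.ext (by rw [h, hσ0]))
          subst this
          have hz : ((0 : Fin (n+1)) : ℕ) = 0 := rfl
          omega
        · rw [if_neg h]
          have := hσ x
          omega
  rw [himg, card_image_of_injective _ (dec_inj 1)]

lemma card_B_succ_succ : (Bset (n+2)).card = (Bset (n+1)).card + (Bset n).card := by
  have hsplit : Bset (n+2) = (Bset (n+2)).filter (fun π => (π 0 : ℕ) = 0)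
      ∪ (Bset (n+2)).filter (fun π => (π 0 : ℕ) = 1) := by
    ext π
    simp only [mem_union, mem_filter]
    constructor
    · intro h
      have hb : Bpred π := by
        have := mem_filter.mp h
        exact this.2
      have := (hb 0).1
      simp only [Fin.val_zero] at this
      rcases Nat.lt_or_ge (π 0 : ℕ) 1 with h1 | h1
      · exact Or.inl ⟨h, by omega⟩
      · exact Or.inr ⟨h, by omega⟩
    · rintro (⟨h, _⟩ | ⟨h, _⟩) <;> exact h
  have hdisj : Disjoint ((Bset (n+2)).filter (fun π => (π 0 : ℕ) = 0))
      ((Bset (n+2)).filter (fun π => (π 0 : ℕ) = 1)) := by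
    rw [Finset.disjoint_left]
    intro π h1 h2
    have := (mem_filter.mp h1).2
    have := (mem_filter.mp h2).2
    omega
  rw [hsplit, card_union_of_disjoint hdisj, card_B_zero, card_B_one, card_B_zero]
end bij

section acount
variable {n : ℕ}

lemma card_A_zero : ((Aset (n+1)).filter (fun π => (π 0 : ℕ) = 0)).card = (Bset n).card := by
  have himg : (Aset (n+1)).filter (fun π => (π 0 : ℕ) = 0)
      = (Bset n).image (fun σ => Equiv.Perm.decomposeFin.symm (0, σ)) := by
    ext π
    simp only [Aset, Bset, mem_filter, mem_image, mem_univ, true_and]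
    constructor
    · rintro ⟨hQ, h0⟩
      obtain ⟨⟨p, σ⟩, rfl⟩ := dec_surj π
      have hp : (p : ℕ) = 0 := by
        rwa [Equiv.Perm.decomposeFin_symm_apply_zero] at h0
      have hp' : p = 0 := Fin.ext (by simpa using hp)
      subst hp'
      refine ⟨σ, ?_, rfl⟩
      obtain ⟨m, hm0, hlt, hgt⟩ := hQ
      have hm : m = 0 := by
        apply Equiv.Perm.decomposeFin.symm ((0:Fin (n+1)), σ) |>.injective
        apply Fin.ext
        rw [hm0, h0]
      subst hm
      intro x
      have := hgt x.succ (by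
        rw [Fin.val_succ]
        have hz : ((0 : Fin (n+1)) : ℕ) = 0 := rfl
        omega)
      rw [dec0_succ, Fin.val_succ] at this
      omega
    · rintro ⟨σ, hσ, rfl⟩
      refine ⟨⟨0, dec0_zero σ, ?_, ?_⟩, dec0_zero σ⟩
      · intro i hi
        have hz : ((0 : Fin (n+1)) : ℕ) = 0 := rfl
        omega
      · intro i hi
        have hz : ((0 : Fin (n+1)) : ℕ) = 0 := rfl
        induction i using Fin.cases with
        | zero => rw [hz] at hi; omega
        | succ x =>
          rw [dec0_succ, Fin.val_succ]
          have := hσ x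
          omega
  rw [himg, card_image_of_injective _ (dec_inj 0)]

lemma card_A_one : ((Aset (n+2)).filter (fun π => (π 0 : ℕ) = 1)).card = (Aset (n+1)).card := by
  have himg : (Aset (n+2)).filter (fun π => (π 0 : ℕ) = 1)
      = (Aset (n+1)).image (fun σ => Equiv.Perm.decomposeFin.symm (1, σ)) := by
    ext π
    simp only [Aset, mem_filter, mem_image, mem_univ, true_and]
    constructor
    · rintro ⟨hQ, h0⟩
      obtain ⟨⟨p, σ⟩, rfl⟩ := dec_surj π
      have hp : (p : ℕ) = 1 := by
        rwa [Equiv.Perm.decomposeFin_symm_apply_zero] at h0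
      have hp' : p = 1 := Fin.ext (by simpa using hp)
      subst hp'
      refine ⟨σ, ?_, rfl⟩
      obtain ⟨M, hM0, hlt, hgt⟩ := hQ
      have hMne : (M : ℕ) ≠ 0 := by
        intro h
        have : M = 0 := Fin.ext h
        rw [this] at hM0
        rw [h0] at hM0
        omega
      have hbd : (M : ℕ) - 1 < n + 1 := by have := M.isLt; omega
      set k : Fin (n+1) := ⟨(M:ℕ) - 1, hbd⟩ with hk
      have hkv : (k:ℕ) = (M:ℕ) - 1 := rfl
      have hksucc : k.succ = M := Fin.ext (by rw [Fin.val_succ]; show (M:ℕ) - 1 + 1 = M; omega)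
      have hσk : (σ k : ℕ) = 0 := by
        have := hM0
        rw [← hksucc, dec1_succ] at this
        by_contra hc
        rw [if_neg hc] at this
        omega
      refine ⟨k, hσk, ?_, ?_⟩
      · intro x hx
        have hxM : ((x.succ : Fin (n+2)) : ℕ) < M := by
          rw [Fin.val_succ]
          show (x:ℕ) + 1 < M
          omega
        have := hlt x.succ hxM
        rw [dec1_succ] at this
        by_cases hc : (σ x : ℕ) = 0
        · rw [if_pos hc] at this
          rw [Fin.val_succ] at this
          omega
        · rw [if_neg hc, Fin.val_succ] at this
          omega
      · intro x hx
        have hxM : (M:ℕ) < ((x.succ : Fin (n+2)) : ℕ) := by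
          rw [Fin.val_succ]
          show (M:ℕ) < (x:ℕ) + 1
          omega
        have := hgt x.succ hxM
        have hσx : (σ x : ℕ) ≠ 0 := by
          intro h
          have : x = k := σ.injective (Fin.ext (by rw [h, hσk]))
          have := congrArg Fin.val this
          simp only [hk] at this
          omega
        rw [dec1_succ, if_neg hσx, Fin.val_succ] at this
        omega
    · rintro ⟨σ, hσ, rfl⟩
      refine ⟨?_, dec1_zero σ⟩
      obtain ⟨m, hm0, hlt, hgt⟩ := hσ
      refine ⟨m.succ, ?_, ?_, ?_⟩
      · rw [dec1_succ, if_pos hm0]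
      · intro i hi
        rw [Fin.val_succ] at hi
        induction i using Fin.cases with
        | zero =>
          rw [dec1_zero]; rfl
        | succ x =>
          rw [Fin.val_succ] at hi ⊢
          have hx : (x:ℕ) < m := by omega
          have hxv := hlt x hx
          have hσx : (σ x : ℕ) ≠ 0 := by omega
          rw [dec1_succ, if_neg hσx]
          omega
      · intro i hi
        rw [Fin.val_succ] at hi
        induction i using Fin.cases with
        | zero =>
          have hz : ((0 : Fin (n+2)) : ℕ) = 0 := rfl
          rw [hz] at hi; omega
        | succ x =>
          rw [Fin.val_succ] at hi ⊢
          have hx : (m:ℕ) < x := by omega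
          have hxv := hgt x hx
          have hσx : (σ x : ℕ) ≠ 0 := by
            intro h
            have : x = m := σ.injective (Fin.ext (by rw [h, hm0]))
            have := congrArg Fin.val this
            omega
          rw [dec1_succ, if_neg hσx]
          omega
  rw [himg, card_image_of_injective _ (dec_inj 1)]

lemma card_A_succ_succ : (Aset (n+2)).card = (Aset (n+1)).card + (Bset (n+1)).card := by
  have hsplit : Aset (n+2) = (Aset (n+2)).filter (fun π => (π 0 : ℕ) = 0)
      ∪ (Aset (n+2)).filter (fun π => (π 0 : ℕ) = 1) := by
    ext π
    simp only [mem_union, mem_filter]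
    constructor
    · intro h
      have hq : Qpred π := (mem_filter.mp h).2
      obtain ⟨m, hm0, hlt, hgt⟩ := hq
      have hz : ((0 : Fin (n+2)) : ℕ) = 0 := rfl
      rcases Nat.eq_zero_or_pos (m : ℕ) with hm | hm
      · have : m = 0 := Fin.ext hm
        subst this
        exact Or.inl ⟨h, hm0⟩
      · have := hlt 0 (by omega)
        exact Or.inr ⟨h, by omega⟩
    · rintro (⟨h, _⟩ | ⟨h, _⟩) <;> exact h
  have hdisj : Disjoint ((Aset (n+2)).filter (fun π => (π 0 : ℕ) = 0))
      ((Aset (n+2)).filter (fun π => (π 0 : ℕ) = 1)) := by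
    rw [Finset.disjoint_left]
    intro π h1 h2
    have := (mem_filter.mp h1).2
    have := (mem_filter.mp h2).2
    omega
  rw [hsplit, card_union_of_disjoint hdisj, card_A_zero, card_A_one]
  omega

end acount

lemma card_B0 : (Bset 0).card = 1 := by
  have : Bset 0 = univ := by
    apply Finset.eq_univ_of_forall
    intro π
    simp only [Bset, mem_filter, mem_univ, true_and]
    exact fun i => i.elim0
  rw [this, card_univ, Fintype.card_perm]
  simp

lemma card_B1 : (Bset 1).card = 1 := by
  have : Bset 1 = univ := by
    apply Finset.eq_univ_of_forall
    intro π
    simp only [Bset, mem_filter, mem_univ, true_and]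
    intro i
    have h1 := (π i).isLt
    have h2 := i.isLt
    omega
  rw [this, card_univ, Fintype.card_perm]
  simp

lemma card_A0 : (Aset 0).card = 0 := by
  rw [Finset.card_eq_zero]
  apply Finset.eq_empty_of_forall_notMem
  intro π
  simp only [Aset, mem_filter, mem_univ, true_and]
  rintro ⟨m, -⟩
  exact m.elim0

lemma card_A1 : (Aset 1).card = 1 := by
  have : Aset 1 = univ := by
    apply Finset.eq_univ_of_forall
    intro π
    simp only [Aset, mem_filter, mem_univ, true_and]
    refine ⟨0, ?_, ?_, ?_⟩
    · have := (π 0).isLt; omega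
    · intro i hi
      have h2 := i.isLt
      have hz : ((0:Fin 1):ℕ) = 0 := rfl
      omega
    · intro i hi
      have h2 := i.isLt
      have hz : ((0:Fin 1):ℕ) = 0 := rfl
      omega
  rw [this, card_univ, Fintype.card_perm]
  simp

lemma fib'_pos_s3 : ∀ n, 1 ≤ fib' n := by
  intro n
  induction n using Nat.twoStepInduction with
  | zero => exact le_refl 1
  | one => exact le_refl 1
  | more n ih1 ih2 => show 1 ≤ fib' (n+1) + fib' n; omega

lemma card_B_eq : ∀ n, (Bset n).card = fib' n := by
  intro n
  induction n using Nat.twoStepInduction with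
  | zero => exact card_B0
  | one => exact card_B1
  | more n ih1 ih2 =>
    rw [card_B_succ_succ, ih1, ih2]
    rfl

lemma card_A_eq : ∀ n, (Aset n).card = fib' (n+1) - 1 := by
  intro n
  induction n using Nat.twoStepInduction with
  | zero => exact card_A0
  | one => exact card_A1
  | more n ih1 ih2 =>
    rw [card_A_succ_succ, ih2, card_B_eq]
    have h1 := fib'_pos_s3 (n+1+1)
    have hrec : fib' (n+2+1) = fib' (n+1+1) + fib' (n+1) := rfl
    omega

theorem stmt3 (n : ℕ) (hn : 1 ≤ n) :
    {π : Equiv.Perm (Fin n) | AvoidsAll π [[3,1,2],[3,2,1],[1,3,4,2]]}.ncard = fib' (n + 1) - 1 := by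
  have hset : {π : Equiv.Perm (Fin n) | AvoidsAll π [[3,1,2],[3,2,1],[1,3,4,2]]} = ↑(Aset n) := by
    ext π
    simp only [Set.mem_setOf_eq, Aset, Finset.coe_filter, Set.mem_setOf_eq, Finset.mem_univ,
      true_and]
    constructor
    · intro h
      exact avoids_imp_Q π hn (h _ (by simp)) (h _ (by simp)) (h _ (by simp))
    · exact Q_imp_avoids π
  rw [hset, Set.ncard_coe_finset, card_A_eq]
end

section
/- For all n ≥ 1, the number of permutations of length n avoiding {231, 312, 1432} equals the number of permutations of length n avoiding {231, 312, 4321, 21543} (an unbalanced Wilf-equivalence). -/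
open Finset MvPolynomial
open scoped Classical

/-!
Avoiding `231` and `312` means being layered, i.e. a direct sum of decreasing blocks. A layered
permutation is determined by its descent word, and every word of length `n - 1` occurs. In a
layered permutation, `1432` occurs iff some layer other than the first has size at least 3,
`4321` iff some layer has size at least 4, and `21543` iff a layer of size at least 2 is followed
by one of size at least 3; on descent words these read `A…DD`, `DDD` and `D…A…DD`. Both classes
of words are counted by their first letter: after an `A` each class reproduces itself, and after
a `D` both reduce to the words without `DD`.
-/

namespace Layered

variable {n : ℕ}

/-- `π` extended to `ℕ` by the identity, so that positions can be shifted freely. -/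
def permNat (π : Equiv.Perm (Fin n)) (i : ℕ) : ℕ :=
  if h : i < n then π ⟨i, h⟩ else i

lemma permNat_of_lt (π : Equiv.Perm (Fin n)) {i : ℕ} (h : i < n) : permNat π i = π ⟨i, h⟩ :=
  dif_pos h

lemma permNat_fin (π : Equiv.Perm (Fin n)) (i : Fin n) : permNat π i = π i :=
  permNat_of_lt π i.2

lemma permNat_of_le (π : Equiv.Perm (Fin n)) {i : ℕ} (h : n ≤ i) : permNat π i = i :=
  dif_neg (by omega)

lemma permNat_lt (π : Equiv.Perm (Fin n)) {i : ℕ} (h : i < n) : permNat π i < n := by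
  rw [permNat_of_lt π h]; exact (π _).2

lemma permNat_injective (π : Equiv.Perm (Fin n)) : Function.Injective (permNat π) := by
  intro i j hij
  unfold permNat at hij
  split_ifs at hij with hi hj hj
  · simpa using π.injective (Fin.ext hij)
  · exact absurd (hij ▸ (π ⟨i, hi⟩).2) hj
  · exact absurd (hij ▸ (π ⟨j, hj⟩).2) (by omega)
  · exact hij

lemma exists_permNat_eq (π : Equiv.Perm (Fin n)) {v : ℕ} (hv : v < n) :
    ∃ i < n, permNat π i = v :=
  ⟨π.symm ⟨v, hv⟩, (π.symm _).2, by rw [permNat_fin]; simp⟩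

lemma lt_of_permNat_lt {π : Equiv.Perm (Fin n)} {i j : ℕ} (hij : i < j)
    (h : permNat π j < permNat π i) : j < n := by
  by_contra hj
  rw [permNat_of_le π (by omega)] at h
  rcases Nat.lt_or_ge i n with hi | hi
  · have := permNat_lt π hi; omega
  · rw [permNat_of_le π hi] at h; omega

lemma containsPat_iff_exists_nat (π : Equiv.Perm (Fin n)) (p : List ℕ) :
    ContainsPat π p ↔ ∃ f : Fin p.length → ℕ, StrictMono f ∧ (∀ i, f i < n) ∧
      ∀ i j, p.get i < p.get j ↔ permNat π (f i) < permNat π (f j) := by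
  constructor
  · rintro ⟨f, hf, hp⟩
    exact ⟨fun i => f i, fun i j h => hf h, fun i => (f i).2, by simpa [permNat_fin] using hp⟩
  · rintro ⟨f, hf, hn, hp⟩
    refine ⟨fun i => ⟨f i, hn i⟩, fun i j h => hf h, fun i j => ?_⟩
    simpa [permNat_of_lt π (hn _)] using hp i j

lemma containsPat_231_iff_exists (π : Equiv.Perm (Fin n)) :
    ContainsPat π [2,3,1] ↔ ∃ a b c, a < b ∧ b < c ∧ c < n ∧
      permNat π c < permNat π a ∧ permNat π a < permNat π b := by
  rw [containsPat_iff_exists_nat]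
  constructor
  · rintro ⟨f, hf, hn, hp⟩
    exact ⟨f 0, f 1, f 2, hf (by decide), hf (by decide), hn 2, (hp 2 0).1 (by decide),
      (hp 0 1).1 (by decide)⟩
  · rintro ⟨a, b, c, hab, hbc, hc, h1, h2⟩
    refine ⟨![a, b, c], ?_, ?_⟩
    · simp [Fin.strictMono_iff_lt_succ, Fin.forall_fin_succ, hab, hbc]
    · simp only [List.length_cons, List.length_nil, Nat.reduceAdd, Fin.forall_fin_succ,
        IsEmpty.forall_iff, Matrix.cons_val_zero, Matrix.cons_val_succ, List.get_eq_getElem,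
        Fin.val_zero, Fin.val_succ, List.getElem_cons_zero, List.getElem_cons_succ, and_true]
      omega

lemma containsPat_312_iff_exists (π : Equiv.Perm (Fin n)) :
    ContainsPat π [3,1,2] ↔ ∃ a b c, a < b ∧ b < c ∧ c < n ∧
      permNat π b < permNat π c ∧ permNat π c < permNat π a := by
  rw [containsPat_iff_exists_nat]
  constructor
  · rintro ⟨f, hf, hn, hp⟩
    exact ⟨f 0, f 1, f 2, hf (by decide), hf (by decide), hn 2, (hp 1 2).1 (by decide),
      (hp 2 0).1 (by decide)⟩
  · rintro ⟨a, b, c, hab, hbc, hc, h1, h2⟩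
    refine ⟨![a, b, c], ?_, ?_⟩
    · simp [Fin.strictMono_iff_lt_succ, Fin.forall_fin_succ, hab, hbc]
    · simp only [List.length_cons, List.length_nil, Nat.reduceAdd, Fin.forall_fin_succ,
        IsEmpty.forall_iff, Matrix.cons_val_zero, Matrix.cons_val_succ, List.get_eq_getElem,
        Fin.val_zero, Fin.val_succ, List.getElem_cons_zero, List.getElem_cons_succ, and_true]
      omega

lemma containsPat_1432_iff_exists (π : Equiv.Perm (Fin n)) :
    ContainsPat π [1,4,3,2] ↔ ∃ a b c d, a < b ∧ b < c ∧ c < d ∧ d < n ∧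
      permNat π a < permNat π d ∧ permNat π d < permNat π c ∧ permNat π c < permNat π b := by
  rw [containsPat_iff_exists_nat]
  constructor
  · rintro ⟨f, hf, hn, hp⟩
    exact ⟨f 0, f 1, f 2, f 3, hf (by decide), hf (by decide), hf (by decide), hn 3,
      (hp 0 3).1 (by decide), (hp 3 2).1 (by decide), (hp 2 1).1 (by decide)⟩
  · rintro ⟨a, b, c, d, hab, hbc, hcd, hd, h1, h2, h3⟩
    refine ⟨![a, b, c, d], ?_, ?_⟩
    · simp [Fin.strictMono_iff_lt_succ, Fin.forall_fin_succ, hab, hbc, hcd]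
    · simp only [List.length_cons, List.length_nil, Nat.reduceAdd, Fin.forall_fin_succ,
        IsEmpty.forall_iff, Matrix.cons_val_zero, Matrix.cons_val_succ, List.get_eq_getElem,
        Fin.val_zero, Fin.val_succ, List.getElem_cons_zero, List.getElem_cons_succ, and_true]
      omega

lemma containsPat_4321_iff_exists (π : Equiv.Perm (Fin n)) :
    ContainsPat π [4,3,2,1] ↔ ∃ a b c d, a < b ∧ b < c ∧ c < d ∧ d < n ∧
      permNat π d < permNat π c ∧ permNat π c < permNat π b ∧ permNat π b < permNat π a := by
  rw [containsPat_iff_exists_nat]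
  constructor
  · rintro ⟨f, hf, hn, hp⟩
    exact ⟨f 0, f 1, f 2, f 3, hf (by decide), hf (by decide), hf (by decide), hn 3,
      (hp 3 2).1 (by decide), (hp 2 1).1 (by decide), (hp 1 0).1 (by decide)⟩
  · rintro ⟨a, b, c, d, hab, hbc, hcd, hd, h1, h2, h3⟩
    refine ⟨![a, b, c, d], ?_, ?_⟩
    · simp [Fin.strictMono_iff_lt_succ, Fin.forall_fin_succ, hab, hbc, hcd]
    · simp only [List.length_cons, List.length_nil, Nat.reduceAdd, Fin.forall_fin_succ,
        IsEmpty.forall_iff, Matrix.cons_val_zero, Matrix.cons_val_succ, List.get_eq_getElem,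
        Fin.val_zero, Fin.val_succ, List.getElem_cons_zero, List.getElem_cons_succ, and_true]
      omega

lemma containsPat_21543_iff_exists (π : Equiv.Perm (Fin n)) :
    ContainsPat π [2,1,5,4,3] ↔ ∃ a b c d e, a < b ∧ b < c ∧ c < d ∧ d < e ∧ e < n ∧
      permNat π b < permNat π a ∧ permNat π a < permNat π e ∧ permNat π e < permNat π d ∧
        permNat π d < permNat π c := by
  rw [containsPat_iff_exists_nat]
  constructor
  · rintro ⟨f, hf, hn, hp⟩
    exact ⟨f 0, f 1, f 2, f 3, f 4, hf (by decide), hf (by decide), hf (by decide),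
      hf (by decide), hn 4, (hp 1 0).1 (by decide), (hp 0 4).1 (by decide),
      (hp 4 3).1 (by decide), (hp 3 2).1 (by decide)⟩
  · rintro ⟨a, b, c, d, e, hab, hbc, hcd, hde, he, h1, h2, h3, h4⟩
    refine ⟨![a, b, c, d, e], ?_, ?_⟩
    · simp [Fin.strictMono_iff_lt_succ, Fin.forall_fin_succ, hab, hbc, hcd, hde]
    · simp only [List.length_cons, List.length_nil, Nat.reduceAdd, Fin.forall_fin_succ,
        IsEmpty.forall_iff, Matrix.cons_val_zero, Matrix.cons_val_succ, List.get_eq_getElem,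
        Fin.val_zero, Fin.val_succ, List.getElem_cons_zero, List.getElem_cons_succ, and_true]
      omega

/-- `π` is a direct sum of decreasing permutations. -/
def IsLayered (π : Equiv.Perm (Fin n)) : Prop :=
  ∀ i j, i < j → permNat π j < permNat π i → permNat π j + (j - i) = permNat π i

/-- The positions strictly inside an inversion `(i, j)` carry exactly the values strictly between
`π j` and `π i`: any other placement creates a `231` or a `312`. -/
lemma isLayered_of_avoids {π : Equiv.Perm (Fin n)} (h231 : ¬ ContainsPat π [2,3,1])
    (h312 : ¬ ContainsPat π [3,1,2]) : IsLayered π := by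
  intro i j hij hji
  have hj : j < n := lt_of_permNat_lt hij hji
  rw [containsPat_231_iff_exists] at h231
  rw [containsPat_312_iff_exists] at h312
  have hcard : (Finset.Ioo i j).card = (Finset.Ioo (permNat π j) (permNat π i)).card := by
    refine Finset.card_nbij (permNat π) ?_ (permNat_injective π).injOn ?_
    · intro k hk
      simp only [Finset.coe_Ioo, Set.mem_Ioo] at hk ⊢
      have := (permNat_injective π).ne (show k ≠ i by omega)
      have := (permNat_injective π).ne (show k ≠ j by omega)
      constructor
      · by_contra
        exact h312 ⟨i, k, j, hk.1, hk.2, hj, by omega, hji⟩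
      · by_contra
        exact h231 ⟨i, k, j, hk.1, hk.2, hj, hji, by omega⟩
    · intro v hv
      simp only [Finset.coe_Ioo, Set.mem_Ioo] at hv
      obtain ⟨k, hk, rfl⟩ := exists_permNat_eq π (lt_trans hv.2 (permNat_lt π (by omega)))
      refine ⟨k, ?_, rfl⟩
      have : k ≠ i := by rintro rfl; omega
      have : k ≠ j := by rintro rfl; omega
      simp only [Finset.coe_Ioo, Set.mem_Ioo]
      constructor
      · by_contra
        exact h231 ⟨k, i, j, by omega, hij, hj, by omega, by omega⟩
      · by_contra
        exact h312 ⟨i, j, k, hij, by omega, hk, by omega, by omega⟩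
  rw [Nat.card_Ioo, Nat.card_Ioo] at hcard
  omega

namespace IsLayered

variable {π : Equiv.Perm (Fin n)} (h : IsLayered π)
include h

lemma not_containsPat_231 : ¬ ContainsPat π [2,3,1] := by
  rw [containsPat_231_iff_exists]
  rintro ⟨a, b, c, hab, hbc, -, h1, h2⟩
  have := h b c hbc (by omega)
  have := h a c (by omega) h1
  omega

lemma not_containsPat_312 : ¬ ContainsPat π [3,1,2] := by
  rw [containsPat_312_iff_exists]
  rintro ⟨a, b, c, hab, hbc, -, h1, h2⟩
  have := h a b hab (by omega)
  have := h a c (by omega) h2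
  omega

lemma permNat_succ_add_one {i j k : ℕ} (hij : i < j) (hji : permNat π j < permNat π i)
    (hik : i ≤ k) (hkj : k < j) : permNat π (k + 1) + 1 = permNat π k := by
  have hrun : ∀ l, i ≤ l → l ≤ j → permNat π l + (l - i) = permNat π i := by
    intro l hil hlj
    rcases hil.eq_or_lt with rfl | hil
    · simp
    rcases hlj.eq_or_lt with rfl | hlj
    · exact h i l hij hji
    have := h i j hij hji
    have := h l j hlj
    have := permNat_injective π |>.ne (show i ≠ l by omega)
    have := h i l hil
    omega
  have := hrun k hik hkj.le
  have := hrun (k + 1) (by omega) hkj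
  omega

lemma permNat_lt_of_ascent {i j k : ℕ} (hik : i ≤ k) (hkj : k < j)
    (hk : ¬ permNat π (k + 1) < permNat π k) : permNat π i < permNat π j := by
  by_contra hji
  have hji : permNat π j < permNat π i :=
    lt_of_le_of_ne (not_lt.1 hji) ((permNat_injective π).ne (by omega))
  have := h.permNat_succ_add_one (by omega) hji hik hkj
  omega

end IsLayered

lemma exists_ascent_of_lt (f : ℕ → ℕ) {a b : ℕ} (hab : a ≤ b) (h : f a < f b) :
    ∃ k, a ≤ k ∧ k < b ∧ ¬ f (k + 1) < f k := by
  induction b, hab using Nat.le_induction with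
  | base => omega
  | succ b hab ih =>
    by_cases hb : f (b + 1) < f b
    · obtain ⟨k, hk⟩ := ih (by omega)
      exact ⟨k, by omega⟩
    · exact ⟨b, hab, by omega, hb⟩

def descents (π : Equiv.Perm (Fin n)) (i : ℕ) : Bool :=
  decide (permNat π (i + 1) < permNat π i)

lemma descents_eq_true {π : Equiv.Perm (Fin n)} {i : ℕ} :
    descents π i = true ↔ permNat π (i + 1) < permNat π i :=
  decide_eq_true_iff

lemma descents_eq_false {π : Equiv.Perm (Fin n)} {i : ℕ} :
    descents π i = false ↔ ¬ permNat π (i + 1) < permNat π i :=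
  decide_eq_false_iff_not

lemma descents_of_le (π : Equiv.Perm (Fin n)) {i : ℕ} (hi : n - 1 ≤ i) : descents π i = false :=
  descents_eq_false.2 fun h => by have := lt_of_permNat_lt (Nat.lt_succ_self i) h; omega

/-! A word `b : ℕ → Bool` is read in the letters `D` (`true`, a descent) and `A` (`false`). `HasDD`
and `HasDDD` ask for a factor; `HasADD` and `HasDADD` ask for an `A`, resp. a `D` and later an `A`,
somewhere before a factor `DD`. -/

def HasDD (b : ℕ → Bool) : Prop := ∃ j, b j = true ∧ b (j + 1) = true

def HasADD (b : ℕ → Bool) : Prop := ∃ k j, k < j ∧ b k = false ∧ b j = true ∧ b (j + 1) = true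

def HasDDD (b : ℕ → Bool) : Prop := ∃ j, b j = true ∧ b (j + 1) = true ∧ b (j + 2) = true

def HasDADD (b : ℕ → Bool) : Prop :=
  ∃ a k j, a < k ∧ k < j ∧ b a = true ∧ b k = false ∧ b j = true ∧ b (j + 1) = true

namespace IsLayered

variable {π : Equiv.Perm (Fin n)} (h : IsLayered π)
include h

lemma containsPat_1432_iff : ContainsPat π [1,4,3,2] ↔ HasADD (descents π) := by
  simp only [containsPat_1432_iff_exists, HasADD, descents_eq_true, descents_eq_false]
  constructor
  · rintro ⟨a, b, c, d, hab, hbc, hcd, -, h1, h2, h3⟩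
    obtain ⟨k, hak, hkb, hk⟩ := exists_ascent_of_lt (permNat π) hab.le (by omega)
    have := h.permNat_succ_add_one (by omega : b < d) (by omega) le_rfl (by omega)
    have := h.permNat_succ_add_one (by omega : b < d) (by omega) (by omega : b ≤ b + 1) (by omega)
    exact ⟨k, b, hkb, hk, by omega, by omega⟩
  · rintro ⟨k, j, hkj, hk, hj, hj1⟩
    have := h.permNat_lt_of_ascent le_rfl (by omega : k < j + 2) hk
    exact ⟨k, j, j + 1, j + 2, hkj, by omega, by omega, lt_of_permNat_lt (by omega) hj1,
      this, hj1, hj⟩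

lemma containsPat_4321_iff : ContainsPat π [4,3,2,1] ↔ HasDDD (descents π) := by
  simp only [containsPat_4321_iff_exists, HasDDD, descents_eq_true]
  constructor
  · rintro ⟨a, b, c, d, hab, hbc, hcd, -, h1, h2, h3⟩
    have hrun := fun k (hak : a ≤ k) (hkd : k < d) =>
      h.permNat_succ_add_one (by omega : a < d) (by omega) hak hkd
    have := hrun a le_rfl (by omega)
    have := hrun (a + 1) (by omega) (by omega)
    have := hrun (a + 2) (by omega) (by omega)
    exact ⟨a, by omega, by omega, by omega⟩
  · rintro ⟨j, hj, hj1, hj2⟩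
    exact ⟨j, j + 1, j + 2, j + 3, by omega, by omega, by omega, lt_of_permNat_lt (by omega) hj2,
      hj2, hj1, hj⟩

lemma containsPat_21543_iff : ContainsPat π [2,1,5,4,3] ↔ HasDADD (descents π) := by
  simp only [containsPat_21543_iff_exists, HasDADD, descents_eq_true, descents_eq_false]
  constructor
  · rintro ⟨a, b, c, d, e, hab, hbc, hcd, hde, -, h1, h2, h3, h4⟩
    have ha := h.permNat_succ_add_one hab h1 le_rfl hab
    have hc := h.permNat_succ_add_one (by omega : c < e) (by omega) le_rfl (by omega)
    have hc1 := h.permNat_succ_add_one (by omega : c < e) (by omega) (by omega : c ≤ c + 1)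
      (by omega)
    obtain ⟨k, hak, hkc, hk⟩ := exists_ascent_of_lt (permNat π) (by omega : a ≤ c) (by omega)
    have hak : a < k := lt_of_le_of_ne hak (by rintro rfl; omega)
    exact ⟨a, k, c, hak, hkc, by omega, hk, by omega, by omega⟩
  · rintro ⟨a, k, j, hak, hkj, ha, hk, hj, hj1⟩
    have := h.permNat_lt_of_ascent hak.le (by omega : k < j + 2) hk
    exact ⟨a, a + 1, j, j + 1, j + 2, by omega, by omega, by omega, by omega,
      lt_of_permNat_lt (by omega) hj1, ha, this, hj1, hj⟩

end IsLayered

section Blocks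

variable {b : ℕ → Bool}

lemma exists_blockStart (b : ℕ → Bool) (k : ℕ) :
    ∃ s, s ≤ k ∧ ∀ i, s ≤ i → i < k → b i = true :=
  ⟨k, le_rfl, fun _ _ _ => by omega⟩

/-- In a descent word, the block (layer) containing `k` is `[blockStart b k, blockEnd b k]`:
a maximal run of `D`s ending in an `A`. -/
def blockStart (b : ℕ → Bool) (k : ℕ) : ℕ := Nat.find (exists_blockStart b k)

noncomputable def blockEnd (b : ℕ → Bool) (k : ℕ) : ℕ :=
  if h : ∃ j, k ≤ j ∧ b j = false then Nat.find h else 0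

lemma blockStart_le (b : ℕ → Bool) (k : ℕ) : blockStart b k ≤ k :=
  (Nat.find_spec (exists_blockStart b k)).1

lemma blockStart_run {k i : ℕ} (h1 : blockStart b k ≤ i) (h2 : i < k) : b i = true :=
  (Nat.find_spec (exists_blockStart b k)).2 i h1 h2

lemma blockStart_le_of {k s : ℕ} (hs : s ≤ k) (h : ∀ i, s ≤ i → i < k → b i = true) :
    blockStart b k ≤ s :=
  Nat.find_min' _ ⟨hs, h⟩

lemma blockStart_pred {k : ℕ} (h : blockStart b k ≠ 0) : b (blockStart b k - 1) = false := by
  by_contra hb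
  have := blockStart_le b k
  have := blockStart_le_of (b := b) (k := k) (s := blockStart b k - 1) (by omega) fun i h1 h2 => by
    rcases h1.eq_or_lt with rfl | h1
    · simpa using hb
    · exact blockStart_run (by omega) h2
  omega

variable {m : ℕ} (hb : ∀ i, m ≤ i → b i = false)
include hb

lemma exists_blockEnd (k : ℕ) : ∃ j, k ≤ j ∧ b j = false :=
  ⟨max k m, le_max_left _ _, hb _ (le_max_right _ _)⟩

lemma le_blockEnd (k : ℕ) : k ≤ blockEnd b k := by
  rw [blockEnd, dif_pos (exists_blockEnd hb k)]; exact (Nat.find_spec (exists_blockEnd hb k)).1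

lemma blockEnd_eq_false (k : ℕ) : b (blockEnd b k) = false := by
  rw [blockEnd, dif_pos (exists_blockEnd hb k)]; exact (Nat.find_spec (exists_blockEnd hb k)).2

lemma blockEnd_run {k i : ℕ} (h1 : k ≤ i) (h2 : i < blockEnd b k) : b i = true := by
  rw [blockEnd, dif_pos (exists_blockEnd hb k)] at h2
  simpa [h1] using Nat.find_min _ h2

lemma blockEnd_le_of {k j : ℕ} (h1 : k ≤ j) (h2 : b j = false) : blockEnd b k ≤ j := by
  rw [blockEnd, dif_pos (exists_blockEnd hb k)]; exact Nat.find_min' _ ⟨h1, h2⟩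

lemma blockEnd_le_max (k : ℕ) : blockEnd b k ≤ max k m :=
  blockEnd_le_of hb (le_max_left _ _) (hb _ (le_max_right _ _))

lemma blockEnd_mono {i j : ℕ} (hij : i ≤ j) : blockEnd b i ≤ blockEnd b j :=
  blockEnd_le_of hb (hij.trans (le_blockEnd hb j)) (blockEnd_eq_false hb j)

lemma blockStart_eq_of_blockEnd_eq {i j : ℕ} (hij : i ≤ j) (he : blockEnd b i = blockEnd b j) :
    blockStart b i = blockStart b j := by
  have hrun : ∀ l, i ≤ l → l < j → b l = true := fun l h1 h2 =>
    blockEnd_run hb h1 (by have := le_blockEnd hb j; omega)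
  have hji : blockStart b j ≤ i := by
    by_contra hlt
    have := blockStart_pred (b := b) (k := j) (by omega)
    have := hrun (blockStart b j - 1) (by omega) (by have := blockStart_le b j; omega)
    simp_all
  apply le_antisymm
  · exact blockStart_le_of hji fun l h1 h2 => blockStart_run h1 (by omega)
  · refine blockStart_le_of ((blockStart_le b i).trans hij) fun l h1 h2 => ?_
    rcases Nat.lt_or_ge l i with hl | hl
    · exact blockStart_run h1 hl
    · exact hrun l hl h2

lemma blockEnd_lt_blockStart {i j : ℕ} (hlt : blockEnd b i < blockEnd b j) :
    blockEnd b i < blockStart b j := by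
  have hj : blockEnd b i < j := by
    by_contra
    have := blockEnd_le_of hb (by omega) (blockEnd_eq_false hb i) (k := j)
    omega
  by_contra
  have := blockStart_run (b := b) (by omega) hj
  simp [blockEnd_eq_false hb i] at this

/-- The layer `[blockStart b k, blockEnd b k]` is filled with its own positions in decreasing
order. -/
noncomputable def layeredValue (b : ℕ → Bool) (k : ℕ) : ℕ := blockStart b k + blockEnd b k - k

lemma layeredValue_lt_or_eq {i j : ℕ} (hij : i < j) :
    layeredValue b i < layeredValue b j ∨ layeredValue b j + (j - i) = layeredValue b i := by
  unfold layeredValue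
  have := blockStart_le b i
  have := blockStart_le b j
  have := le_blockEnd hb i
  have := le_blockEnd hb j
  rcases (blockEnd_mono hb hij.le).eq_or_lt with he | hlt
  · have := blockStart_eq_of_blockEnd_eq hb hij.le he
    omega
  · have := blockEnd_lt_blockStart hb hlt
    omega

lemma layeredValue_succ_of_true {i : ℕ} (hi : b i = true) :
    layeredValue b (i + 1) + 1 = layeredValue b i := by
  have hlt : i < blockEnd b i :=
    (le_blockEnd hb i).lt_of_ne fun he => by simpa [← he, hi] using blockEnd_eq_false hb i
  have he : blockEnd b i = blockEnd b (i + 1) :=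
    le_antisymm (blockEnd_mono hb (by omega)) (blockEnd_le_of hb hlt (blockEnd_eq_false hb i))
  have := blockStart_eq_of_blockEnd_eq hb (by omega) he
  have := blockStart_le b i
  unfold layeredValue
  omega

lemma layeredValue_lt_succ_of_false {i : ℕ} (hi : b i = false) :
    layeredValue b i < layeredValue b (i + 1) := by
  have := blockEnd_le_of hb le_rfl hi
  have : blockStart b (i + 1) = i + 1 := by
    have := blockStart_le b (i + 1)
    by_contra
    have := blockStart_run (b := b) (k := i + 1) (i := i) (by omega) (by omega)
    simp_all
  have := blockStart_le b i
  have := le_blockEnd hb (i + 1)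
  unfold layeredValue
  omega

end Blocks

lemma IsLayered.permNat_add_sub_eq {π : Equiv.Perm (Fin n)} (h : IsLayered π) {s e : ℕ}
    (hrun : ∀ l, s ≤ l → l < e → descents π l = true) {l : ℕ} (hsl : s ≤ l) (hle : l ≤ e) :
    permNat π l + (l - s) = permNat π s := by
  induction l, hsl using Nat.le_induction with
  | base => simp
  | succ l hsl ih =>
    have := h l (l + 1) (by omega) (descents_eq_true.1 (hrun l hsl (by omega)))
    have := ih (by omega)
    omega

/-- The `s` positions before the layer `[s, e]` of `k` carry values below `π e`, the positions
after it values above `π s`; together with `π s - π e = e - s` this forces `π s = e`. -/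
lemma IsLayered.permNat_eq_layeredValue {π : Equiv.Perm (Fin n)} (h : IsLayered π) {k : ℕ}
    (hk : k < n) : permNat π k = layeredValue (descents π) k := by
  have hb : ∀ i, n - 1 ≤ i → descents π i = false := fun i => descents_of_le π
  set s := blockStart (descents π) k
  set e := blockEnd (descents π) k
  have hsk : s ≤ k := blockStart_le _ k
  have hke : k ≤ e := le_blockEnd hb k
  have hen : e < n := by have := blockEnd_le_max hb k; omega
  have hrun : ∀ l, s ≤ l → l ≤ e → permNat π l + (l - s) = permNat π s :=
    fun l => h.permNat_add_sub_eq fun i hsi hie => by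
      rcases Nat.lt_or_ge i k with hik | hik
      · exact blockStart_run hsi hik
      · exact blockEnd_run hb hik hie
  have hbefore : ∀ j < s, permNat π j < permNat π e := fun j hj =>
    h.permNat_lt_of_ascent (by omega : j ≤ s - 1) (by omega)
      (descents_eq_false.1 (blockStart_pred (by omega)))
  have hafter : ∀ j, e < j → permNat π s < permNat π j := fun j hj =>
    h.permNat_lt_of_ascent (hsk.trans hke) hj (descents_eq_false.1 (blockEnd_eq_false hb k))
  have hs : s ≤ permNat π e := by
    simpa using Finset.card_le_card_of_injOn (s := Finset.Iio s) (t := Finset.Iio (permNat π e))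
      (permNat π) (fun j hj => by simpa using hbefore j (by simpa using hj))
      (permNat_injective π).injOn
  have he : n - e - 1 ≤ n - permNat π s - 1 := by
    simpa using Finset.card_le_card_of_injOn (s := Finset.Ioo e n)
      (t := Finset.Ioo (permNat π s) n) (permNat π)
      (fun j hj => by
        simp only [Finset.coe_Ioo, Set.mem_Ioo] at hj ⊢
        exact ⟨hafter j hj.1, permNat_lt π hj.2⟩)
      (permNat_injective π).injOn
  have := permNat_lt π (show s < n by omega)
  have := hrun e (by omega) le_rfl
  have := hrun k hsk hke
  unfold layeredValue
  omega

lemma IsLayered.eq_of_descents_eq {π σ : Equiv.Perm (Fin n)} (hπ : IsLayered π)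
    (hσ : IsLayered σ) (h : descents π = descents σ) : π = σ := by
  ext k
  have := hπ.permNat_eq_layeredValue k.2
  rw [h, ← hσ.permNat_eq_layeredValue k.2, permNat_fin, permNat_fin] at this
  exact this

section OfDescents

variable {b : ℕ → Bool} (hb : ∀ i, n - 1 ≤ i → b i = false)
include hb

lemma layeredValue_lt {k : ℕ} (hk : k < n) : layeredValue b k < n := by
  have := blockStart_le b k
  have := le_blockEnd hb k
  have := blockEnd_le_max hb k
  unfold layeredValue
  omega

lemma layeredValue_injOn : Set.InjOn (layeredValue b) (Set.Iio n) := by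
  intro i _ j _ hij
  rcases lt_trichotomy i j with hlt | rfl | hlt
  · rcases layeredValue_lt_or_eq hb hlt with h | h <;> omega
  · rfl
  · rcases layeredValue_lt_or_eq hb hlt with h | h <;> omega

noncomputable def ofDescents : Equiv.Perm (Fin n) :=
  Equiv.ofBijective (fun k => ⟨layeredValue b k, layeredValue_lt hb k.2⟩)
    (Finite.injective_iff_bijective.1 fun i j hij =>
      Fin.ext (layeredValue_injOn hb i.2 j.2 (congrArg Fin.val hij)))

lemma permNat_ofDescents {k : ℕ} (hk : k < n) : permNat (ofDescents hb) k = layeredValue b k := by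
  rw [permNat_of_lt _ hk]; rfl

lemma isLayered_ofDescents : IsLayered (ofDescents hb) := by
  intro i j hij hji
  have hj := lt_of_permNat_lt hij hji
  rw [permNat_ofDescents hb hj, permNat_ofDescents hb (hij.trans hj)] at hji ⊢
  exact (layeredValue_lt_or_eq hb hij).resolve_left (by omega)

lemma descents_ofDescents : descents (ofDescents hb) = b := by
  funext i
  rcases Nat.lt_or_ge i (n - 1) with hi | hi
  · rw [Bool.eq_iff_iff, descents_eq_true, permNat_ofDescents hb (by omega),
      permNat_ofDescents hb (by omega)]
    cases hbi : b i
    · have := layeredValue_lt_succ_of_false hb hbi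
      exact iff_of_false (by omega) Bool.false_ne_true
    · have := layeredValue_succ_of_true hb hbi
      exact iff_of_true (by omega) rfl
  · rw [descents_of_le _ hi, hb i hi]

end OfDescents

section Words

def toWord {m : ℕ} (w : Fin m → Bool) (i : ℕ) : Bool := if h : i < m then w ⟨i, h⟩ else false

def wordCons (x : Bool) (b : ℕ → Bool) : ℕ → Bool
  | 0 => x
  | i + 1 => b i

lemma toWord_of_le {m : ℕ} (w : Fin m → Bool) {i : ℕ} (hi : m ≤ i) : toWord w i = false :=
  dif_neg (by omega)

lemma toWord_cons {m : ℕ} (x : Bool) (w : Fin m → Bool) :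
    toWord (Fin.cons x w : Fin (m + 1) → Bool) = wordCons x (toWord w) := by
  funext i
  cases i with
  | zero => simp [toWord, wordCons]
  | succ i =>
    simp only [toWord, wordCons, Nat.add_lt_add_iff_right]
    split_ifs with h
    · exact Fin.cons_succ (α := fun _ => Bool) x w ⟨i, h⟩
    · rfl

noncomputable def wordCount (P : (ℕ → Bool) → Prop) (m : ℕ) : ℕ :=
  #{w : Fin m → Bool | P (toWord w)}

lemma wordCount_congr {P Q : (ℕ → Bool) → Prop} (h : ∀ b, P b ↔ Q b) (m : ℕ) :
    wordCount P m = wordCount Q m := by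
  simp only [wordCount, h]

lemma wordCount_succ (P : (ℕ → Bool) → Prop) (m : ℕ) :
    wordCount P (m + 1) =
      wordCount (fun b => P (wordCons true b)) m + wordCount (fun b => P (wordCons false b)) m := by
  simp only [wordCount, Finset.card_filter]
  rw [← (Fin.consEquiv fun _ => Bool).sum_comp, Fintype.sum_prod_type, Fintype.sum_bool]
  simp [Fin.consEquiv, toWord_cons]

variable {b : ℕ → Bool}

lemma hasADD_wordCons_true : HasADD (wordCons true b) ↔ HasADD b := by
  constructor
  · rintro ⟨(_ | k), (_ | j), hkj, hk, hj, hj1⟩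
    · omega
    · nomatch hk
    · omega
    · exact ⟨k, j, by omega, hk, hj, hj1⟩
  · rintro ⟨k, j, hkj, hk, hj, hj1⟩
    exact ⟨k + 1, j + 1, by omega, hk, hj, hj1⟩

lemma hasADD_wordCons_false : HasADD (wordCons false b) ↔ HasDD b := by
  constructor
  · rintro ⟨k, (_ | j), hkj, -, hj, hj1⟩
    · omega
    · exact ⟨j, hj, hj1⟩
  · rintro ⟨j, hj, hj1⟩
    exact ⟨0, j + 1, by omega, rfl, hj, hj1⟩

lemma hasDDD_wordCons_false : HasDDD (wordCons false b) ↔ HasDDD b := by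
  constructor
  · rintro ⟨(_ | j), hj, hj1, hj2⟩
    · nomatch hj
    · exact ⟨j, hj, hj1, hj2⟩
  · rintro ⟨j, hj, hj1, hj2⟩
    exact ⟨j + 1, hj, hj1, hj2⟩

lemma hasDADD_wordCons_false : HasDADD (wordCons false b) ↔ HasDADD b := by
  constructor
  · rintro ⟨(_ | a), (_ | k), (_ | j), hak, hkj, ha, hk, hj, hj1⟩ <;> try omega
    · nomatch ha
    · exact ⟨a, k, j, by omega, by omega, ha, hk, hj, hj1⟩
  · rintro ⟨a, k, j, hak, hkj, ha, hk, hj, hj1⟩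
    exact ⟨a + 1, k + 1, j + 1, by omega, by omega, ha, hk, hj, hj1⟩

/-- A leading `D` turns a later `DD` into `DDD` (if only `D`s precede it) or `DADD`. -/
lemma hasDDD_or_hasDADD_wordCons_true :
    HasDDD (wordCons true b) ∨ HasDADD (wordCons true b) ↔ HasDD b := by
  constructor
  · rintro (⟨(_ | j), hj, hj1, hj2⟩ | ⟨(_ | a), (_ | k), (_ | j), hak, hkj, -, -, hj, hj1⟩)
    · exact ⟨0, hj1, hj2⟩
    · exact ⟨j, hj, hj1⟩
    all_goals first | omega | exact ⟨j, hj, hj1⟩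
  · rintro ⟨j, hj, hj1⟩
    by_cases hA : ∀ k < j, b k = true
    · have hD : ∀ i ≤ j + 1, b i = true := fun i hi => by
        rcases Nat.lt_or_ge i j with h | h
        · exact hA i h
        · rcases (show i = j ∨ i = j + 1 by omega) with rfl | rfl <;> assumption
      exact Or.inl ⟨0, rfl, hD 0 (by omega), hD 1 (by omega)⟩
    · obtain ⟨k, hkj, hk⟩ := not_forall₂.1 hA
      exact Or.inr ⟨0, k + 1, j + 1, by omega, by omega, rfl, Bool.eq_false_iff.2 hk, hj, hj1⟩

lemma wordCount_not_hasADD (m : ℕ) :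
    wordCount (fun b => ¬ HasADD b) m = wordCount (fun b => ¬ HasDDD b ∧ ¬ HasDADD b) m := by
  induction m with
  | zero => simp [wordCount, toWord, HasADD, HasDDD, HasDADD]
  | succ m ih =>
    rw [wordCount_succ, wordCount_succ, add_comm]
    congr 1
    · exact wordCount_congr (fun b => by
        rw [hasADD_wordCons_false, ← hasDDD_or_hasDADD_wordCons_true, not_or]) m
    · simpa only [hasADD_wordCons_true, hasDDD_wordCons_false, hasDADD_wordCons_false] using ih

end Words

lemma toWord_descents (π : Equiv.Perm (Fin n)) :
    toWord (fun i : Fin (n - 1) => descents π i) = descents π := by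
  funext i
  rw [toWord]
  split_ifs with hi
  · rfl
  · exact (descents_of_le π (by omega)).symm

lemma ncard_isLayered_descents (P : (ℕ → Bool) → Prop) :
    {π : Equiv.Perm (Fin n) | IsLayered π ∧ P (descents π)}.ncard = wordCount P (n - 1) := by
  rw [Set.ncard_eq_toFinset_card', Set.toFinset_ofPred, wordCount]
  refine Finset.card_bij (fun π _ i => descents π i) ?_ ?_ ?_
  · intro π hπ
    simp only [Finset.mem_filter, Finset.mem_univ, true_and] at hπ ⊢
    rw [toWord_descents]
    exact hπ.2
  · intro π hπ σ hσ hπσ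
    simp only [Finset.mem_filter, Finset.mem_univ, true_and] at hπ hσ
    refine hπ.1.eq_of_descents_eq hσ.1 ?_
    rw [← toWord_descents π, ← toWord_descents σ, hπσ]
  · intro w hw
    have hb : ∀ i, n - 1 ≤ i → toWord w i = false := fun i => toWord_of_le w
    refine ⟨ofDescents hb, ?_, ?_⟩
    · simpa [descents_ofDescents, isLayered_ofDescents] using hw
    · funext i
      simp [descents_ofDescents, toWord, i.2]

lemma avoidsAll_231_312_cons_iff {π : Equiv.Perm (Fin n)} {S : List (List ℕ)} :
    AvoidsAll π ([2,3,1] :: [3,1,2] :: S) ↔ IsLayered π ∧ AvoidsAll π S := by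
  simp only [AvoidsAll, List.forall_mem_cons]
  constructor
  · rintro ⟨h231, h312, hS⟩
    exact ⟨isLayered_of_avoids h231 h312, hS⟩
  · rintro ⟨h, hS⟩
    exact ⟨h.not_containsPat_231, h.not_containsPat_312, hS⟩

end Layered

open Layered

theorem stmt4_general (n : ℕ) :
    {π : Equiv.Perm (Fin n) | AvoidsAll π [[2,3,1],[3,1,2],[1,4,3,2]]}.ncard =
    {π : Equiv.Perm (Fin n) | AvoidsAll π [[2,3,1],[3,1,2],[4,3,2,1],[2,1,5,4,3]]}.ncard := by
  have h₁ : {π : Equiv.Perm (Fin n) | AvoidsAll π [[2,3,1],[3,1,2],[1,4,3,2]]} =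
      {π | IsLayered π ∧ ¬ HasADD (descents π)} := by
    ext π
    exact avoidsAll_231_312_cons_iff.trans
      (and_congr_right fun h => by simp [AvoidsAll, h.containsPat_1432_iff])
  have h₂ : {π : Equiv.Perm (Fin n) | AvoidsAll π [[2,3,1],[3,1,2],[4,3,2,1],[2,1,5,4,3]]} =
      {π | IsLayered π ∧ ¬ HasDDD (descents π) ∧ ¬ HasDADD (descents π)} := by
    ext π
    exact avoidsAll_231_312_cons_iff.trans (and_congr_right fun h => by
      simp [AvoidsAll, h.containsPat_4321_iff, h.containsPat_21543_iff])
  rw [h₁, h₂]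
  exact (ncard_isLayered_descents (fun b => ¬ HasADD b)).trans <| (wordCount_not_hasADD _).trans
    (ncard_isLayered_descents (fun b => ¬ HasDDD b ∧ ¬ HasDADD b)).symm

theorem stmt4 (n : ℕ) (hn : 1 ≤ n) :
    {π : Equiv.Perm (Fin n) | AvoidsAll π [[2,3,1],[3,1,2],[1,4,3,2]]}.ncard =
    {π : Equiv.Perm (Fin n) | AvoidsAll π [[2,3,1],[3,1,2],[4,3,2,1],[2,1,5,4,3]]}.ncard :=
  stmt4_general n
end

section
/- A permutation is in Av(231, 312, 4321, 21543) if and only if it has the form π ⊕ σ ⊕ τ, where π is an increasing (possibly empty) permutation, σ is either empty or equal to 321, and τ is a permutation avoiding 231, 312, and 321 (a Fibonacci permutation). -/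
open Finset MvPolynomial
open scoped Classical

/-!
Avoiding 231 and 312 means being layered: whenever `(i, j)` is an inversion, `π` drops by exactly
one at each step from `i` to `j`. For a layered permutation, avoiding 4321 says that every
inversion has width at most 2, avoiding 321 that it has width at most 1, and avoiding 21543 that
an inversion lying entirely to the right of another one has width 1. So if `P` is not Fibonacci
it has an inversion `(a, a + 2)`; then no inversion starts before `a` or crosses `a + 3`, and
cutting `P` at `a` and `a + 3` writes it as `id_a ⊕ 321 ⊕ τ` with `τ` Fibonacci. Conversely,
the three conditions pass to direct sums.
-/

open Equiv

section Patterns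

variable {n : ℕ} (π : Perm (Fin n))

lemma containsPat_iff_chain {p : List ℕ} (hp : p.Nodup)
    (hsucc : ∀ i j, p.get i < p.get j → ∃ k, p.get k = p.get i + 1) :
    ContainsPat π p ↔ ∃ f : Fin p.length → Fin n, StrictMono f ∧
      ∀ i j, p.get j = p.get i + 1 → π (f i) < π (f j) := by
  refine exists_congr fun f => and_congr_right fun _ =>
    ⟨fun h i j hij => (h i j).1 (by omega), fun h => ?_⟩
  have hmono : ∀ i j, p.get i < p.get j → π (f i) < π (f j) := by
    suffices ∀ d i j, p.get j = p.get i + d + 1 → π (f i) < π (f j) from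
      fun i j hij => this (p.get j - p.get i - 1) i j (by omega)
    intro d
    induction d with
    | zero => exact h
    | succ d ih =>
      intro i j hij
      obtain ⟨k, hk⟩ := hsucc i j (by omega)
      exact (h i k hk).trans (ih k j (by omega))
  intro i j
  refine ⟨hmono i j, fun hij => ?_⟩
  rcases lt_trichotomy (p.get i) (p.get j) with hlt | heq | hgt
  · exact hlt
  · rw [hp.get_inj_iff.1 heq] at hij
    exact absurd hij (lt_irrefl _)
  · exact absurd (hmono j i hgt) (not_lt.2 hij.le)

lemma containsPat_231_s5 : ContainsPat π [2,3,1] ↔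
    ∃ x y z, x < y ∧ y < z ∧ π x < π y ∧ π z < π x := by
  rw [containsPat_iff_chain π (by decide) (by decide)]
  simp only [List.length_cons, List.length_nil, Fin.exists_fin_succ_pi, Fin.forall_fin_succ,
    Fin.cons_succ, Fin.cons_zero, Fin.strictMono_iff_lt_succ, List.get_cons_zero,
    IsEmpty.forall_iff, Fin.castSucc_zero, ← Fin.succ_castSucc]
  simp [and_assoc]

lemma containsPat_312_s5 : ContainsPat π [3,1,2] ↔
    ∃ x y z, x < y ∧ y < z ∧ π y < π z ∧ π z < π x := by
  rw [containsPat_iff_chain π (by decide) (by decide)]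
  simp only [List.length_cons, List.length_nil, Fin.exists_fin_succ_pi, Fin.forall_fin_succ,
    Fin.cons_succ, Fin.cons_zero, Fin.strictMono_iff_lt_succ, List.get_cons_zero,
    IsEmpty.forall_iff, Fin.castSucc_zero, ← Fin.succ_castSucc]
  simp [and_assoc]

lemma containsPat_321_s5 : ContainsPat π [3,2,1] ↔
    ∃ x y z, x < y ∧ y < z ∧ π y < π x ∧ π z < π y := by
  rw [containsPat_iff_chain π (by decide) (by decide)]
  simp only [List.length_cons, List.length_nil, Fin.exists_fin_succ_pi, Fin.forall_fin_succ,
    Fin.cons_succ, Fin.cons_zero, Fin.strictMono_iff_lt_succ, List.get_cons_zero,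
    IsEmpty.forall_iff, Fin.castSucc_zero, ← Fin.succ_castSucc]
  simp [and_assoc]

lemma containsPat_4321_s5 : ContainsPat π [4,3,2,1] ↔
    ∃ w x y z, w < x ∧ x < y ∧ y < z ∧ π x < π w ∧ π y < π x ∧ π z < π y := by
  rw [containsPat_iff_chain π (by decide) (by decide)]
  simp only [List.length_cons, List.length_nil, Fin.exists_fin_succ_pi, Fin.forall_fin_succ,
    Fin.cons_succ, Fin.cons_zero, Fin.strictMono_iff_lt_succ, List.get_cons_zero,
    IsEmpty.forall_iff, Fin.castSucc_zero, ← Fin.succ_castSucc]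
  simp [and_assoc]

lemma containsPat_21543_s5 : ContainsPat π [2,1,5,4,3] ↔
    ∃ v w x y z, v < w ∧ w < x ∧ x < y ∧ y < z ∧
      π v < π z ∧ π w < π v ∧ π y < π x ∧ π z < π y := by
  rw [containsPat_iff_chain π (by decide) (by decide)]
  simp only [List.length_cons, List.length_nil, Fin.exists_fin_succ_pi, Fin.forall_fin_succ,
    Fin.cons_succ, Fin.cons_zero, Fin.strictMono_iff_lt_succ, List.get_cons_zero,
    IsEmpty.forall_iff, Fin.castSucc_zero, ← Fin.succ_castSucc]
  simp [and_assoc]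

end Patterns

section Conditions

variable {n : ℕ}

def IsLayered (π : Perm (Fin n)) : Prop :=
  ∀ i k j : Fin n, i ≤ k → k ≤ j → π j < π i → (π k : ℕ) + k = π i + i

def InvWidthLE (π : Perm (Fin n)) (d : ℕ) : Prop :=
  ∀ i j : Fin n, π j < π i → (j : ℕ) ≤ i + d

def LaterInvAdjacent (π : Perm (Fin n)) : Prop :=
  ∀ i j k l : Fin n, i < j → j < k → π j < π i → π l < π k → (l : ℕ) ≤ k + 1

variable {π : Perm (Fin n)}

lemma InvWidthLE.mono {d e : ℕ} (h : InvWidthLE π d) (hde : d ≤ e) : InvWidthLE π e :=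
  fun i j hji => (h i j hji).trans (by omega)

lemma LaterInvAdjacent.of_invWidthLE_one (h : InvWidthLE π 1) : LaterInvAdjacent π :=
  fun _ _ k l _ _ _ hlk => h k l hlk

lemma isLayered_refl : IsLayered (Equiv.refl (Fin n)) :=
  fun _ _ _ hik hkj hji => absurd (hik.trans hkj) (not_le.2 hji)

lemma invWidthLE_refl : InvWidthLE (Equiv.refl (Fin n)) 0 :=
  fun i j hji => by simp only [Equiv.refl_apply, Fin.lt_def] at hji; omega

lemma isLayered_perm321 : IsLayered perm321 := by
  unfold IsLayered perm321; decide

lemma invWidthLE_perm321 : InvWidthLE perm321 2 := by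
  unfold InvWidthLE perm321; decide

lemma laterInvAdjacent_perm321 : LaterInvAdjacent perm321 := by
  unfold LaterInvAdjacent perm321; decide

lemma eq_perm321 {M : Perm (Fin 3)} (hM : IsLayered M) (h : M 2 < M 0) : M = perm321 := by
  have h1 := hM 0 1 2 (by decide) (by decide) h
  have h2 := hM 0 2 2 (by decide) le_rfl h
  have h0 := (M 0).isLt
  ext x
  fin_cases x <;> simp [perm321, Fin.rev] at h1 h2 ⊢ <;> omega

end Conditions

section Avoidance

variable {n : ℕ} {π : Perm (Fin n)}

lemma lt_apply_lt_of_between (h231 : ¬ ContainsPat π [2,3,1])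
    (h312 : ¬ ContainsPat π [3,1,2]) {i k j : Fin n} (hik : i < k) (hkj : k < j)
    (hji : π j < π i) : π j < π k ∧ π k < π i := by
  refine ⟨lt_of_not_ge fun h => h312 ?_, lt_of_not_ge fun h => h231 ?_⟩
  · exact (containsPat_312_s5 π).2
      ⟨i, k, j, hik, hkj, h.lt_of_ne (π.injective.ne hkj.ne), hji⟩
  · exact (containsPat_231_s5 π).2
      ⟨i, k, j, hik, hkj, h.lt_of_ne (π.injective.ne hik.ne), hji⟩

lemma apply_lt_or_lt_apply_of_lt (h231 : ¬ ContainsPat π [2,3,1]) {m i j : Fin n}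
    (hmi : m < i) (hij : i < j) : π m < π j ∨ π i < π m := by
  by_contra! h
  refine h231 ((containsPat_231_s5 π).2 ⟨m, i, j, hmi, hij, ?_, ?_⟩)
  · exact h.2.lt_of_ne (π.injective.ne hmi.ne)
  · exact h.1.lt_of_ne (π.injective.ne (hmi.trans hij).ne')

lemma apply_lt_or_lt_apply_of_gt (h312 : ¬ ContainsPat π [3,1,2]) {m i j : Fin n}
    (hij : i < j) (hjm : j < m) : π m < π j ∨ π i < π m := by
  by_contra! h
  refine h312 ((containsPat_312_s5 π).2 ⟨i, j, m, hij, hjm, ?_, ?_⟩)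
  · exact h.1.lt_of_ne (π.injective.ne hjm.ne)
  · exact h.2.lt_of_ne (π.injective.ne (hij.trans hjm).ne')

lemma map_Icc_eq_Icc (h231 : ¬ ContainsPat π [2,3,1]) (h312 : ¬ ContainsPat π [3,1,2])
    {i j : Fin n} (hij : i < j) (hji : π j < π i) :
    (Finset.Icc i j).map π.toEmbedding = Finset.Icc (π j) (π i) := by
  ext v
  obtain ⟨m, rfl⟩ := π.surjective v
  simp only [Finset.mem_map_equiv, Equiv.symm_apply_apply, Finset.mem_Icc]
  constructor
  · rintro ⟨him, hmj⟩
    rcases him.lt_or_eq with him | rfl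
    · rcases hmj.lt_or_eq with hmj | rfl
      · exact (lt_apply_lt_of_between h231 h312 him hmj hji).imp le_of_lt le_of_lt
      · exact ⟨le_rfl, hji.le⟩
    · exact ⟨hji.le, le_rfl⟩
  · rintro ⟨hjm, hmi⟩
    refine ⟨le_of_not_gt fun hmi' => ?_, le_of_not_gt fun hjm' => ?_⟩
    · rcases apply_lt_or_lt_apply_of_lt h231 hmi' hij with h | h
      exacts [hjm.not_gt h, hmi.not_gt h]
    · rcases apply_lt_or_lt_apply_of_gt h312 hij hjm' with h | h
      exacts [hjm.not_gt h, hmi.not_gt h]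

lemma isLayered_of_avoids (h231 : ¬ ContainsPat π [2,3,1]) (h312 : ¬ ContainsPat π [3,1,2]) :
    IsLayered π := by
  have hinv : ∀ i j : Fin n, i < j → π j < π i → (π j : ℕ) + j = π i + i := by
    intro i j hij hji
    have hcard := congrArg Finset.card (map_Icc_eq_Icc h231 h312 hij hji)
    rw [Finset.card_map, Fin.card_Icc, Fin.card_Icc] at hcard
    rw [Fin.lt_def] at hij hji
    omega
  intro i k j hik hkj hji
  rcases hik.lt_or_eq with hik | rfl
  · rcases hkj.lt_or_eq with hkj | rfl
    · exact hinv i k hik (lt_apply_lt_of_between h231 h312 hik hkj hji).2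
    · exact hinv i k hik hji
  · rfl

lemma IsLayered.not_containsPat_231 (hL : IsLayered π) : ¬ ContainsPat π [2,3,1] := by
  rw [containsPat_231_s5]
  rintro ⟨x, y, z, hxy, hyz, hxy', hzx⟩
  have := hL x y z hxy.le hyz.le hzx
  rw [Fin.lt_def] at hxy hxy'
  omega

lemma IsLayered.not_containsPat_312 (hL : IsLayered π) : ¬ ContainsPat π [3,1,2] := by
  rw [containsPat_312_s5]
  rintro ⟨x, y, z, hxy, hyz, hyz', hzx⟩
  have hy := hL x y z hxy.le hyz.le hzx
  have hz := hL x z z (hxy.trans hyz).le le_rfl hzx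
  rw [Fin.lt_def] at hyz hyz'
  omega

lemma avoids_231_312_iff :
    ¬ ContainsPat π [2,3,1] ∧ ¬ ContainsPat π [3,1,2] ↔ IsLayered π :=
  ⟨fun h => isLayered_of_avoids h.1 h.2,
    fun hL => ⟨hL.not_containsPat_231, hL.not_containsPat_312⟩⟩

lemma IsLayered.val_add (hL : IsLayered π) {i j : Fin n} (hji : π j < π i) {t : ℕ}
    (ht : (i : ℕ) + t ≤ j) : (π ⟨i + t, by omega⟩ : ℕ) + t = π i := by
  have := hL i ⟨i + t, by omega⟩ j (Fin.le_def.2 (by simp)) (Fin.le_def.2 ht) hji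
  simp only at this
  omega

lemma IsLayered.invWidthLE_two_iff (hL : IsLayered π) :
    ¬ ContainsPat π [4,3,2,1] ↔ InvWidthLE π 2 := by
  rw [containsPat_4321_s5]
  constructor
  · intro h i j hji
    by_contra! hij
    have h1 := hL.val_add hji (t := 1) (by omega)
    have h2 := hL.val_add hji (t := 2) (by omega)
    have h3 := hL.val_add hji (t := 3) (by omega)
    refine h ⟨i, ⟨i + 1, by omega⟩, ⟨i + 2, by omega⟩, ⟨i + 3, by omega⟩,
      ?_, ?_, ?_, ?_, ?_, ?_⟩ <;> simp only [Fin.lt_def] <;> omega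
  · rintro hW ⟨w, x, y, z, hwx, hxy, hyz, h1, h2, h3⟩
    have := hW w z (h3.trans (h2.trans h1))
    rw [Fin.lt_def] at hwx hxy hyz
    omega

lemma IsLayered.invWidthLE_one_iff (hL : IsLayered π) :
    ¬ ContainsPat π [3,2,1] ↔ InvWidthLE π 1 := by
  rw [containsPat_321_s5]
  constructor
  · intro h i j hji
    by_contra! hij
    have h1 := hL.val_add hji (t := 1) (by omega)
    have h2 := hL.val_add hji (t := 2) (by omega)
    refine h ⟨i, ⟨i + 1, by omega⟩, ⟨i + 2, by omega⟩, ?_, ?_, ?_, ?_⟩ <;>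
      simp only [Fin.lt_def] <;> omega
  · rintro hW ⟨x, y, z, hxy, hyz, h1, h2⟩
    have := hW x z (h2.trans h1)
    rw [Fin.lt_def] at hxy hyz
    omega

lemma IsLayered.laterInvAdjacent_iff (hL : IsLayered π) (hW : InvWidthLE π 2) :
    ¬ ContainsPat π [2,1,5,4,3] ↔ LaterInvAdjacent π := by
  rw [containsPat_21543_s5]
  constructor
  · intro h i j k l hij hjk hji hlk
    by_contra! hkl
    have h1 := hL.val_add hlk (t := 1) (by omega)
    have h2 := hL.val_add hlk (t := 2) (by omega)
    rw [Fin.lt_def] at hij hjk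
    -- otherwise `(i, k + 2)` would be an inversion of width more than 2
    have hi : π i < π ⟨k + 2, by omega⟩ := by
      by_contra! hi
      have := hW i ⟨k + 2, by omega⟩
        (hi.lt_of_ne (π.injective.ne (Fin.ne_of_val_ne (by simp; omega))))
      simp only at this
      omega
    refine h ⟨i, j, k, ⟨k + 1, by omega⟩, ⟨k + 2, by omega⟩, Fin.lt_def.2 hij,
      Fin.lt_def.2 hjk, ?_, ?_, hi, hji, ?_, ?_⟩ <;> simp only [Fin.lt_def] <;> omega
  · rintro hA ⟨v, w, x, y, z, hvw, hwx, hxy, hyz, -, h1, h2, h3⟩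
    have := hA v w x z hvw hwx h1 (h3.trans h2)
    rw [Fin.lt_def] at hxy hyz
    omega

lemma avoidsAll_fibonacci_iff :
    AvoidsAll π [[2,3,1],[3,1,2],[3,2,1]] ↔ IsLayered π ∧ InvWidthLE π 1 := by
  simp only [AvoidsAll, List.mem_cons, List.not_mem_nil, or_false, forall_eq_or_imp, forall_eq]
  rw [← and_assoc, avoids_231_312_iff]
  exact and_congr_right fun hL => hL.invWidthLE_one_iff

lemma avoidsAll_iff : AvoidsAll π [[2,3,1],[3,1,2],[4,3,2,1],[2,1,5,4,3]] ↔
    IsLayered π ∧ InvWidthLE π 2 ∧ LaterInvAdjacent π := by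
  simp only [AvoidsAll, List.mem_cons, List.not_mem_nil, or_false, forall_eq_or_imp, forall_eq]
  rw [← and_assoc, avoids_231_312_iff]
  constructor
  · rintro ⟨hL, h4321, h21543⟩
    have hW := hL.invWidthLE_two_iff.1 h4321
    exact ⟨hL, hW, (hL.laterInvAdjacent_iff hW).1 h21543⟩
  · rintro ⟨hL, hW, hA⟩
    exact ⟨hL, hL.invWidthLE_two_iff.2 hW, (hL.laterInvAdjacent_iff hW).2 hA⟩

end Avoidance

section DirectSum

variable {m n : ℕ}

@[simp] lemma Fin.castAdd_le_castAdd_iff {i j : Fin m} :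
    Fin.castAdd n i ≤ Fin.castAdd n j ↔ i ≤ j :=
  (Fin.castAddOrderEmb n).le_iff_le

@[simp] lemma Fin.castAdd_lt_castAdd_iff {i j : Fin m} :
    Fin.castAdd n i < Fin.castAdd n j ↔ i < j :=
  (Fin.castAddOrderEmb n).lt_iff_lt

lemma Fin.castAdd_lt_natAdd_s5 (i : Fin m) (j : Fin n) : Fin.castAdd n i < Fin.natAdd m j := by
  simp only [Fin.lt_def, Fin.val_castAdd, Fin.val_natAdd]
  omega

variable {π : Perm (Fin m)} {σ : Perm (Fin n)}

@[simp] lemma dsum_castAdd_s5 (i : Fin m) : dsum π σ (Fin.castAdd n i) = Fin.castAdd n (π i) := by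
  simp [dsum]

@[simp] lemma dsum_natAdd_s5 (j : Fin n) : dsum π σ (Fin.natAdd m j) = Fin.natAdd m (σ j) := by
  simp [dsum]

lemma permCongr_finCongr_refl (p : Perm (Fin n)) : (finCongr rfl).permCongr p = p :=
  Equiv.ext fun _ => rfl

lemma permCongr_dsum_refl_zero (p : Perm (Fin n)) :
    (finCongr (Nat.zero_add n)).permCongr (dsum (Equiv.refl (Fin 0)) p) = p := by
  ext x
  have : finCongr (Nat.zero_add n).symm x = Fin.natAdd 0 x := Fin.ext (by simp)
  rw [Equiv.permCongr_apply, finCongr_symm, this, dsum_natAdd_s5]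
  simp

lemma dsum_inversion {x y : Fin (m + n)} (hxy : x ≤ y) (hyx : dsum π σ y < dsum π σ x) :
    (∃ i j, x = Fin.castAdd n i ∧ y = Fin.castAdd n j ∧ π j < π i) ∨
      (∃ i j, x = Fin.natAdd m i ∧ y = Fin.natAdd m j ∧ σ j < σ i) := by
  induction x using Fin.addCases with
  | left i => induction y using Fin.addCases with
    | left j => exact .inl ⟨i, j, rfl, rfl, by simpa using hyx⟩
    | right j =>
      simp only [dsum_castAdd_s5, dsum_natAdd_s5] at hyx
      exact absurd hyx (Fin.castAdd_lt_natAdd_s5 _ _).asymm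
  | right i => induction y using Fin.addCases with
    | left j => exact absurd hxy (Fin.castAdd_lt_natAdd_s5 _ _).not_ge
    | right j => exact .inr ⟨i, j, rfl, rfl, by simpa using hyx⟩

lemma exists_castAdd_of_le {x : Fin (m + n)} {j : Fin m} (h : x ≤ Fin.castAdd n j) :
    ∃ k, x = Fin.castAdd n k := by
  rw [Fin.le_def, Fin.val_castAdd] at h
  exact ⟨⟨x, by omega⟩, rfl⟩

lemma exists_natAdd_of_le {x : Fin (m + n)} {i : Fin n} (h : Fin.natAdd m i ≤ x) :
    ∃ k, x = Fin.natAdd m k := by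
  rw [Fin.le_def, Fin.val_natAdd] at h
  exact ⟨⟨x - m, by omega⟩, by ext; simp only [Fin.val_natAdd]; omega⟩

lemma isLayered_dsum_iff : IsLayered (dsum π σ) ↔ IsLayered π ∧ IsLayered σ := by
  refine ⟨fun h => ⟨fun i k j hik hkj hji => ?_, fun i k j hik hkj hji => ?_⟩,
    fun ⟨hπ, hσ⟩ => ?_⟩
  · simpa using h (Fin.castAdd n i) (Fin.castAdd n k) (Fin.castAdd n j) (by simpa) (by simpa)
      (by simpa)
  · have := h (Fin.natAdd m i) (Fin.natAdd m k) (Fin.natAdd m j) (by simpa) (by simpa)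
      (by simpa)
    simp only [dsum_natAdd_s5, Fin.val_natAdd] at this
    omega
  intro x z y hxz hzy hyx
  rcases dsum_inversion (hxz.trans hzy) hyx with
    ⟨i, j, rfl, rfl, hji⟩ | ⟨i, j, rfl, rfl, hji⟩
  · obtain ⟨k, rfl⟩ := exists_castAdd_of_le hzy
    simpa using hπ i k j (by simpa using hxz) (by simpa using hzy) hji
  · obtain ⟨k, rfl⟩ := exists_natAdd_of_le hxz
    have := hσ i k j (by simpa using hxz) (by simpa using hzy) hji
    simp only [dsum_natAdd_s5, Fin.val_natAdd]
    omega

lemma invWidthLE_dsum_iff {d : ℕ} :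
    InvWidthLE (dsum π σ) d ↔ InvWidthLE π d ∧ InvWidthLE σ d := by
  refine ⟨fun h => ⟨fun i j hji => ?_, fun i j hji => ?_⟩, fun ⟨hπ, hσ⟩ x y hyx => ?_⟩
  · simpa using h (Fin.castAdd n i) (Fin.castAdd n j) (by simpa)
  · have := h (Fin.natAdd m i) (Fin.natAdd m j) (by simpa)
    simp only [Fin.val_natAdd] at this
    omega
  rcases le_or_gt y x with hyx' | hxy
  · rw [Fin.le_def] at hyx'
    omega
  rcases dsum_inversion hxy.le hyx with ⟨i, j, rfl, rfl, hji⟩ | ⟨i, j, rfl, rfl, hji⟩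
  · simpa using hπ i j hji
  · have := hσ i j hji
    simp only [Fin.val_natAdd]
    omega

lemma laterInvAdjacent_dsum_iff : LaterInvAdjacent (dsum π σ) ↔
    LaterInvAdjacent π ∧ LaterInvAdjacent σ ∧ (InvWidthLE π 0 ∨ InvWidthLE σ 1) := by
  constructor
  · intro h
    refine ⟨fun i j k l hij hjk hji hlk => ?_, fun i j k l hij hjk hji hlk => ?_, ?_⟩
    · simpa using h (Fin.castAdd n i) (Fin.castAdd n j) (Fin.castAdd n k) (Fin.castAdd n l)
        (by simpa) (by simpa) (by simpa) (by simpa)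
    · have := h (Fin.natAdd m i) (Fin.natAdd m j) (Fin.natAdd m k) (Fin.natAdd m l)
        (by simpa) (by simpa) (by simpa) (by simpa)
      simp only [Fin.val_natAdd] at this
      omega
    refine or_iff_not_imp_left.2 fun hπ k l hlk => ?_
    by_contra hkl
    refine hπ fun i j hji => ?_
    by_contra hij
    have := h (Fin.castAdd n i) (Fin.castAdd n j) (Fin.natAdd m k) (Fin.natAdd m l)
      (by rw [Fin.castAdd_lt_castAdd_iff, Fin.lt_def]; omega) (Fin.castAdd_lt_natAdd_s5 _ _)
      (by simpa) (by simpa)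
    simp only [Fin.val_natAdd] at this
    omega
  rintro ⟨hπ, hσ, hπσ⟩ x y z w hxy hyz hyx hwz
  rcases le_or_gt w z with hwz' | hzw
  · rw [Fin.le_def] at hwz'
    omega
  rcases dsum_inversion hzw.le hwz with ⟨k, l, rfl, rfl, hlk⟩ | ⟨k, l, rfl, rfl, hlk⟩
  · obtain ⟨j, rfl⟩ := exists_castAdd_of_le hyz.le
    obtain ⟨i, rfl⟩ := exists_castAdd_of_le hxy.le
    simpa using hπ i j k l (by simpa using hxy) (by simpa using hyz) (by simpa using hyx) hlk
  simp only [Fin.val_natAdd]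
  rcases dsum_inversion hxy.le hyx with ⟨i, j, rfl, rfl, hji⟩ | ⟨i, j, rfl, rfl, hji⟩
  · rcases hπσ with h0 | h1
    · have := h0 i j hji
      rw [Fin.castAdd_lt_castAdd_iff, Fin.lt_def] at hxy
      omega
    · have := h1 k l hlk
      omega
  · have := hσ i j k l (by simpa using hxy) (by simpa using hyz) hji hlk
    omega

end DirectSum

section Decomposition

variable {m n : ℕ}

lemma val_apply_castAdd_lt {P : Perm (Fin (m + n))}
    (h : ∀ i j, P (Fin.castAdd n i) < P (Fin.natAdd m j)) (i : Fin m) :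
    (P (Fin.castAdd n i) : ℕ) < m := by
  by_contra! hi
  -- the `n` values `P (natAdd m j)` would all lie above `P (castAdd n i) ≥ m`
  have := Finset.card_le_card_of_injOn (fun j => P (Fin.natAdd m j))
    (s := Finset.univ) (t := Finset.Ioi (P (Fin.castAdd n i)))
    (fun j _ => by simpa using h i j) ((P.injective.comp (Fin.natAdd_injective n m)).injOn)
  simp only [Finset.card_univ, Fintype.card_fin, Fin.card_Ioi] at this
  omega

lemma exists_eq_dsum {P : Perm (Fin (m + n))}
    (h : ∀ i j, P (Fin.castAdd n i) < P (Fin.natAdd m j)) : ∃ π σ, P = dsum π σ := by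
  obtain ⟨⟨π, σ⟩, hπσ⟩ :=
    Perm.mem_sumCongrHom_range_of_perm_mapsTo_inl (σ := finSumFinEquiv.symm.permCongr P) (by
      rintro _ ⟨i, rfl⟩
      refine ⟨⟨P (Fin.castAdd n i), val_apply_castAdd_lt h i⟩, ?_⟩
      simp [Equiv.permCongr_apply, Equiv.eq_symm_apply])
  refine ⟨π, σ, ?_⟩
  rw [Perm.sumCongrHom_apply] at hπσ
  change P = finSumFinEquiv.permCongr (Perm.sumCongr π σ)
  rw [hπσ]
  ext x
  simp

end Decomposition

section Structure

variable {N : ℕ} {P : Perm (Fin N)}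

lemma exists_wide_inv (hW : InvWidthLE P 2) (h1 : ¬ InvWidthLE P 1) :
    ∃ a, ∃ ha : a + 2 < N, P ⟨a + 2, ha⟩ < P ⟨a, by omega⟩ := by
  simp only [InvWidthLE, not_forall, not_le] at h1
  obtain ⟨i, j, hji, hij⟩ := h1
  have := hW i j hji
  refine ⟨i, by omega, ?_⟩
  convert hji using 2
  exact Fin.ext (by simp only; omega)

lemma apply_lt_apply_of_lt_wide_inv (hL : IsLayered P) (hW : InvWidthLE P 2)
    (hA : LaterInvAdjacent P) {i j : Fin N} (hj : (j : ℕ) = i + 2) (hji : P j < P i)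
    {x y : Fin N} (hxi : x < i) (hxy : x < y) : P x < P y := by
  by_contra! h
  have hyx : P y < P x := h.lt_of_ne (P.injective.ne hxy.ne')
  have hxy' := hW x y hyx
  rw [Fin.lt_def] at hxi hxy
  rcases lt_or_ge y i with hyi | hiy
  · have := hA x y i j (Fin.lt_def.2 hxy) hyi hyx hji
    omega
  · have hyj : P j < P y := by
      have h1 := hL i y j hiy (Fin.le_def.2 (by omega)) hji
      have h2 := hL i j j (Fin.le_def.2 (by omega)) le_rfl hji
      rw [Fin.lt_def]
      omega
    have := hW x j (hyj.trans hyx)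
    omega

lemma apply_lt_apply_across_wide_inv (hL : IsLayered P) (hW : InvWidthLE P 2)
    (hA : LaterInvAdjacent P) {i j : Fin N} (hj : (j : ℕ) = i + 2) (hji : P j < P i)
    {x y : Fin N} (hx : (x : ℕ) < i + 3) (hy : (i : ℕ) + 3 ≤ y) : P x < P y := by
  rcases lt_or_ge x i with hxi | hix
  · exact apply_lt_apply_of_lt_wide_inv hL hW hA hj hji hxi (Fin.lt_def.2 (by omega))
  by_contra! h
  have hyx : P y < P x := h.lt_of_ne (P.injective.ne (Fin.ne_of_val_ne (by omega)))
  have hx' := hL i x j hix (Fin.le_def.2 (by omega)) hji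
  have := hW i y (hyx.trans_le (Fin.le_def.2 (by rw [Fin.le_def] at hix; omega)))
  omega

lemma exists_eq_dsum_perm321 (hL : IsLayered P) (hW : InvWidthLE P 2) (hAdj : LaterInvAdjacent P)
    {a : ℕ} (ha : a + 2 < N) (hinv : P ⟨a + 2, ha⟩ < P ⟨a, by omega⟩) :
    ∃ (c : ℕ) (h : a + 3 + c = N) (τ : Perm (Fin c)), (IsLayered τ ∧ InvWidthLE τ 1) ∧
      P = (finCongr h).permCongr (dsum (dsum (Equiv.refl (Fin a)) perm321) τ) := by
  have hbefore : ∀ {x y : Fin N}, x < ⟨a, by omega⟩ → x < y → P x < P y :=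
    apply_lt_apply_of_lt_wide_inv hL hW hAdj rfl hinv
  have hcut : ∀ {x y : Fin N}, (x : ℕ) < a + 3 → a + 3 ≤ (y : ℕ) → P x < P y :=
    apply_lt_apply_across_wide_inv hL hW hAdj rfl hinv
  obtain ⟨c, rfl⟩ : ∃ c, N = a + 3 + c := ⟨N - (a + 3), by omega⟩
  refine ⟨c, rfl, ?_⟩
  simp only [permCongr_finCongr_refl]
  obtain ⟨L, τ, rfl⟩ := exists_eq_dsum fun i j => hcut (by simp) (by simp)
  obtain ⟨A, M, rfl⟩ := exists_eq_dsum (P := L) fun i j => by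
    simpa using hbefore (x := Fin.castAdd c (Fin.castAdd 3 i)) (y := Fin.castAdd c (Fin.natAdd a j))
      (by simp [Fin.lt_def]) (by simpa using Fin.castAdd_lt_natAdd_s5 i j)
  have hA : A = Equiv.refl _ := by
    have : StrictMono A := fun x y hxy => by
      simpa using hbefore (x := Fin.castAdd c (Fin.castAdd 3 x))
        (y := Fin.castAdd c (Fin.castAdd 3 y)) (by simp [Fin.lt_def]) (by simpa using hxy)
    exact Equiv.ext (congrFun this.eq_id)
  have hM : M 2 < M 0 := by
    rw [show (⟨a + 2, ha⟩ : Fin (a + 3 + c)) = Fin.castAdd c (Fin.natAdd a 2) from rfl,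
      show (⟨a, by omega⟩ : Fin (a + 3 + c)) = Fin.castAdd c (Fin.natAdd a 0) from rfl] at hinv
    simpa using hinv
  rw [isLayered_dsum_iff, isLayered_dsum_iff] at hL
  rw [laterInvAdjacent_dsum_iff] at hAdj
  refine ⟨τ, ⟨hL.2, hAdj.2.2.resolve_left fun h0 => ?_⟩, by rw [hA, eq_perm321 hL.1.2 hM]⟩
  have := h0 (Fin.natAdd a 0) (Fin.natAdd a 2) (by simpa using hM)
  simp at this

end Structure

section Fibonacci

variable {a c : ℕ} {τ : Perm (Fin c)}

lemma avoidsAll_dsum_refl (hτ : AvoidsAll τ [[2,3,1],[3,1,2],[3,2,1]]) :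
    AvoidsAll (dsum (Equiv.refl (Fin a)) τ) [[2,3,1],[3,1,2],[4,3,2,1],[2,1,5,4,3]] := by
  obtain ⟨hL, hW⟩ := avoidsAll_fibonacci_iff.1 hτ
  have hW' : InvWidthLE (dsum (Equiv.refl (Fin a)) τ) 1 :=
    invWidthLE_dsum_iff.2 ⟨invWidthLE_refl.mono zero_le_one, hW⟩
  exact avoidsAll_iff.2 ⟨isLayered_dsum_iff.2 ⟨isLayered_refl, hL⟩, hW'.mono one_le_two,
    .of_invWidthLE_one hW'⟩

lemma avoidsAll_dsum_perm321 (hτ : AvoidsAll τ [[2,3,1],[3,1,2],[3,2,1]]) :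
    AvoidsAll (dsum (dsum (Equiv.refl (Fin a)) perm321) τ)
      [[2,3,1],[3,1,2],[4,3,2,1],[2,1,5,4,3]] := by
  obtain ⟨hL, hW⟩ := avoidsAll_fibonacci_iff.1 hτ
  have hL' : IsLayered (dsum (Equiv.refl (Fin a)) perm321) :=
    isLayered_dsum_iff.2 ⟨isLayered_refl, isLayered_perm321⟩
  have hW' : InvWidthLE (dsum (Equiv.refl (Fin a)) perm321) 2 :=
    invWidthLE_dsum_iff.2 ⟨invWidthLE_refl.mono zero_le_two, invWidthLE_perm321⟩
  have hA' : LaterInvAdjacent (dsum (Equiv.refl (Fin a)) perm321) :=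
    laterInvAdjacent_dsum_iff.2 ⟨.of_invWidthLE_one (invWidthLE_refl.mono zero_le_one),
      laterInvAdjacent_perm321, .inl invWidthLE_refl⟩
  exact avoidsAll_iff.2 ⟨isLayered_dsum_iff.2 ⟨hL', hL⟩,
    invWidthLE_dsum_iff.2 ⟨hW', hW.mono one_le_two⟩,
    laterInvAdjacent_dsum_iff.2 ⟨hA', .of_invWidthLE_one hW, .inr hW⟩⟩

end Fibonacci

theorem stmt5 (N : ℕ) (P : Equiv.Perm (Fin N)) :
    AvoidsAll P [[2,3,1],[3,1,2],[4,3,2,1],[2,1,5,4,3]] ↔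
      ((∃ (a c : ℕ) (h : a + c = N) (τ : Equiv.Perm (Fin c)), AvoidsAll τ [[2,3,1],[3,1,2],[3,2,1]] ∧
          P = (finCongr h).permCongr (dsum (Equiv.refl (Fin a)) τ)) ∨
        (∃ (a c : ℕ) (h : a + 3 + c = N) (τ : Equiv.Perm (Fin c)), AvoidsAll τ [[2,3,1],[3,1,2],[3,2,1]] ∧
          P = (finCongr h).permCongr (dsum (dsum (Equiv.refl (Fin a)) perm321) τ))) := by
  constructor
  · intro hP
    obtain ⟨hL, hW, hA⟩ := avoidsAll_iff.1 hP
    by_cases h1 : InvWidthLE P 1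
    · exact .inl ⟨0, N, Nat.zero_add N, P, avoidsAll_fibonacci_iff.2 ⟨hL, h1⟩,
        (permCongr_dsum_refl_zero P).symm⟩
    · obtain ⟨a, ha, hinv⟩ := exists_wide_inv hW h1
      obtain ⟨c, h, τ, hτ, rfl⟩ := exists_eq_dsum_perm321 hL hW hA ha hinv
      exact .inr ⟨a, c, h, τ, avoidsAll_fibonacci_iff.2 hτ, rfl⟩
  · rintro (⟨a, c, rfl, τ, hτ, rfl⟩ | ⟨a, c, rfl, τ, hτ, rfl⟩)
    · exact (permCongr_finCongr_refl _).symm ▸ avoidsAll_dsum_refl hτ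
    · exact (permCongr_finCongr_refl _).symm ▸ avoidsAll_dsum_perm321 hτ
end
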